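/- arXiv:1501.02830 — 5 statements merged into one kernel-verified Lean document; each statement's English description precedes it below -/
import Mathlib

section
/- Let B > 0 and let g : (0,B) → ℝ be Lebesgue integrable. If ∫_0^β (β − S)^{1/2} g(S) dS = 0 for every β ∈ (0,B], then g = 0 almost everywhere on (0,B). -/
open Set MeasureTheory Filter Topology

lemma abel_beta_aux : ∃ c : ℝ, 0 < c ∧ ∀ s t : ℝ, s < t →
    ∫ β in Ioo s t, Real.sqrt (t - β) * Real.sqrt (β - s) = c * (t - s)^2 := by
  have hcont : Continuous (fun x : ℝ => Real.sqrt (1 - x) * Real.sqrt x) := by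
    continuity
  refine ⟨∫ x in (0:ℝ)..1, Real.sqrt (1 - x) * Real.sqrt x, ?_, ?_⟩
  · apply intervalIntegral.intervalIntegral_pos_of_pos_on
    · exact (hcont.intervalIntegrable 0 1)
    · intro x hx
      exact mul_pos (Real.sqrt_pos.2 (by linarith [hx.2])) (Real.sqrt_pos.2 hx.1)
    · norm_num
  · intro s t hst
    set u := t - s with hu_def
    have hu : 0 < u := by simp [hu_def]; linarith
    rw [← integral_Ioc_eq_integral_Ioo,
      ← intervalIntegral.integral_of_le hst.le]
    have h1 : (∫ x in (0:ℝ)..u, Real.sqrt (t - (x + s)) * Real.sqrt ((x + s) - s))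
        = ∫ x in s..t, Real.sqrt (t - x) * Real.sqrt (x - s) := by
      have := intervalIntegral.integral_comp_add_right
        (a := (0:ℝ)) (b := u) (f := fun x => Real.sqrt (t - x) * Real.sqrt (x - s)) s
      simpa [hu_def] using this
    rw [← h1]
    have h2 : (∫ x in (0:ℝ)..1, Real.sqrt (u - u * x) * Real.sqrt (u * x))
        = u⁻¹ • ∫ x in (0:ℝ)..u, Real.sqrt (u - x) * Real.sqrt x := by
      have := intervalIntegral.integral_comp_mul_left
        (a := (0:ℝ)) (b := 1) (f := fun x => Real.sqrt (u - x) * Real.sqrt x) (c := u) hu.ne'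
      simpa using this
    have h3 : (∫ x in (0:ℝ)..u, Real.sqrt (t - (x + s)) * Real.sqrt ((x + s) - s))
        = ∫ x in (0:ℝ)..u, Real.sqrt (u - x) * Real.sqrt x := by
      congr 1; funext x; congr 2 <;> ring
    rw [h3]
    have h4 : (∫ x in (0:ℝ)..u, Real.sqrt (u - x) * Real.sqrt x)
        = u * ∫ x in (0:ℝ)..1, Real.sqrt (u - u * x) * Real.sqrt (u * x) := by
      rw [h2, smul_eq_mul]; field_simp
    rw [h4]
    have h5 : (∫ x in (0:ℝ)..1, Real.sqrt (u - u * x) * Real.sqrt (u * x))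
        = u * ∫ x in (0:ℝ)..1, Real.sqrt (1 - x) * Real.sqrt x := by
      rw [← intervalIntegral.integral_const_mul]
      congr 1; funext x
      have e1 : u - u * x = u * (1 - x) := by ring
      rw [e1, Real.sqrt_mul hu.le, Real.sqrt_mul hu.le]
      have : Real.sqrt u * Real.sqrt u = u := Real.mul_self_sqrt hu.le
      linear_combination (Real.sqrt (1-x) * Real.sqrt x) * this
    rw [h5]; ring

lemma abel_small (c C d : ℝ) (hd : 0 < d) (h : ∀ δ, 0 < δ → δ ≤ d → |c| ≤ δ * C) : c = 0 := by
  have hC : 0 ≤ C := by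
    by_contra hC
    push_neg at hC
    have := h d hd le_rfl
    nlinarith [abs_nonneg c]
  by_contra hc
  have h0 : 0 < |c| := abs_pos.2 hc
  have hδ : 0 < min d (|c| / (2 * C + 2)) := lt_min hd (by positivity)
  have := h _ hδ (min_le_left _ _)
  have h2 : min d (|c| / (2 * C + 2)) ≤ |c| / (2 * C + 2) := min_le_right _ _
  have h3 : min d (|c| / (2 * C + 2)) * C ≤ (|c| / (2 * C + 2)) * C :=
    mul_le_mul_of_nonneg_right h2 hC
  have h4 : (|c| / (2 * C + 2)) * C < |c| := by
    rw [div_mul_eq_mul_div, div_lt_iff₀ (by linarith)]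
    nlinarith
  linarith

lemma abel_lim (G : ℝ → ℝ) (hG : Integrable G) (t d c : ℝ) (hd : 0 < d)
    (h : ∀ δ, 0 < δ → δ ≤ d → |c| ≤ ∫ S in Ioo t (t + δ), |G S|) : c = 0 := by
  have habs : (fun S => |G S|) = fun S => ‖G S‖ := by funext S; rw [Real.norm_eq_abs]
  have key : Tendsto (fun n : ℕ => ∫ S in Ioo t (t + d / (n + 1)), |G S|) atTop (𝓝 0) := by
    have h0 : (0 : ℝ) = ∫ x : ℝ, (0 : ℝ) ∂volume := by simp
    rw [h0]
    have := tendsto_integral_of_dominated_convergence (μ := volume)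
      (F := fun n : ℕ => (Ioo t (t + d / (n + 1))).indicator (fun S => |G S|))
      (f := fun _ => (0:ℝ)) (bound := fun S => |G S|)
      (fun n => by
        rw [habs]
        exact (hG.1.norm.indicator measurableSet_Ioo))
      (by rw [habs]; exact hG.norm)
      (fun n => Eventually.of_forall fun x => by
        by_cases hx : x ∈ Ioo t (t + d / (n + 1))
        · simp [hx, Real.norm_eq_abs, abs_abs]
        · simp [hx, Real.norm_eq_abs, abs_nonneg])
      (Eventually.of_forall fun x => by
        rcases le_or_gt x t with hx | hx
        · refine tendsto_const_nhds.congr fun n => ?_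
          have hmem : x ∉ Ioo t (t + d / (n + 1)) := fun hm => absurd hm.1 (not_lt.2 hx)
          simp [hmem]
        · have : ∀ᶠ n : ℕ in atTop, (Ioo t (t + d / (n + 1))).indicator
              (fun S => |G S|) x = 0 := by
            have hto : Tendsto (fun n : ℕ => t + d / (n + 1)) atTop (𝓝 t) := by
              have : Tendsto (fun n : ℕ => d / (n + 1)) atTop (𝓝 0) :=
                tendsto_const_div_atTop_nhds_zero_nat d |>.comp (tendsto_add_atTop_nat 1) |>.congr
                  (fun n => by norm_num)
              simpa using tendsto_const_nhds.add this
            filter_upwards [hto.eventually (eventually_lt_nhds hx)] with n hn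
            have hmem : x ∉ Ioo t (t + d / (n + 1)) := fun hm => absurd hm.2 (by linarith)
            simp [hmem]
          exact Tendsto.congr' (this.mono fun n hn => hn.symm) tendsto_const_nhds)
    refine this.congr fun n => ?_
    rw [integral_indicator measurableSet_Ioo]
  have hle : ∀ n : ℕ, |c| ≤ ∫ S in Ioo t (t + d / (n + 1)), |G S| := by
    intro n
    refine h _ (by positivity) ?_
    rw [div_le_iff₀ (by positivity)]
    nlinarith [Nat.cast_nonneg (α := ℝ) n]
  have : |c| ≤ 0 := ge_of_tendsto' key (fun n => hle n)
  have := abs_nonneg c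
  have : |c| = 0 := le_antisymm ‹|c| ≤ 0› ‹0 ≤ |c|›
  exact abs_eq_zero.mp this

lemma abel_fubini (B : ℝ) (hB : 0 < B) (G : ℝ → ℝ) (hGm : StronglyMeasurable G)
    (hG : Integrable G volume)
    (h : ∀ β ∈ Ioc (0:ℝ) B, ∫ S in Ioo 0 β, Real.sqrt (β - S) * G S = 0)
    (c : ℝ) (hc : 0 < c)
    (hbeta : ∀ s t : ℝ, s < t →
      ∫ β in Ioo s t, Real.sqrt (t - β) * Real.sqrt (β - s) = c * (t - s)^2) :
    ∀ t ∈ Ioc (0:ℝ) B, ∫ S in Ioo 0 t, (t - S)^2 * G S = 0 := by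
  intro t ht
  obtain ⟨ht0, htB⟩ := ht
  set μ := volume.restrict (Ioo (0:ℝ) t) with hμ
  haveI : IsFiniteMeasure μ := ⟨by
    rw [hμ, Measure.restrict_apply_univ]; exact measure_Ioo_lt_top⟩
  set K : ℝ × ℝ → ℝ := fun p => Real.sqrt (t - p.1) * Real.sqrt (p.1 - p.2) with hK
  have hKcont : Continuous K := by
    apply Continuous.mul
    · exact (continuous_const.sub continuous_fst).sqrt
    · exact (continuous_fst.sub continuous_snd).sqrt
  -- integrability of the full integrand on the product
  have hint : Integrable (fun p : ℝ × ℝ => K p * G p.2) (μ.prod μ) := by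
    have hmeas : AEStronglyMeasurable (fun p : ℝ × ℝ => K p * G p.2) (μ.prod μ) :=
      (hKcont.stronglyMeasurable.mul (hGm.comp_measurable measurable_snd)).aestronglyMeasurable
    have hbd : Integrable (fun p : ℝ × ℝ => (1:ℝ) * (t * |G p.2|)) (μ.prod μ) := by
      apply Integrable.mul_prod (f := fun _ : ℝ => (1:ℝ)) (g := fun S => t * |G S|)
      · exact integrable_const 1
      · have : (fun S => t * |G S|) = fun S => t * ‖G S‖ := by
          funext S; rw [Real.norm_eq_abs]
        rw [this]
        exact (hG.norm.restrict).const_mul t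
    refine hbd.mono hmeas ?_
    rw [hμ, Measure.prod_restrict]
    refine (ae_restrict_iff' (measurableSet_Ioo.prod measurableSet_Ioo)).2
      (Eventually.of_forall fun p hp => ?_)
    obtain ⟨hp1, hp2⟩ := hp
    have h1 : Real.sqrt (t - p.1) ≤ Real.sqrt t :=
      Real.sqrt_le_sqrt (by linarith [hp1.1])
    have h2 : Real.sqrt (p.1 - p.2) ≤ Real.sqrt t :=
      Real.sqrt_le_sqrt (by linarith [hp1.2, hp2.1])
    have hst : Real.sqrt t * Real.sqrt t = t := Real.mul_self_sqrt ht0.le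
    have hKnn : 0 ≤ K p := mul_nonneg (Real.sqrt_nonneg _) (Real.sqrt_nonneg _)
    have hKle : K p ≤ t := by
      calc K p ≤ Real.sqrt t * Real.sqrt t :=
            mul_le_mul h1 h2 (Real.sqrt_nonneg _) (Real.sqrt_nonneg _)
        _ = t := hst
    have e1 : ‖K p * G p.2‖ = K p * |G p.2| := by
      rw [Real.norm_eq_abs, abs_mul, abs_of_nonneg hKnn]
    have e2 : ‖(1:ℝ) * (t * |G p.2|)‖ = t * |G p.2| := by
      rw [Real.norm_eq_abs, one_mul, abs_mul, abs_of_pos ht0, abs_abs]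
    rw [e1, e2]
    exact mul_le_mul_of_nonneg_right hKle (abs_nonneg _)
  have hswap := integral_integral_swap (μ := μ) (ν := μ)
    (f := fun β S => K (β, S) * G S) hint
  -- the iterated integral (β outside) vanishes
  have hLHS : (∫ β, (∫ S, K (β, S) * G S ∂μ) ∂μ) = 0 := by
    conv_lhs => rw [hμ]
    rw [setIntegral_congr_fun measurableSet_Ioo (g := fun _ => (0:ℝ)) ?_]
    · simp
    intro β hβ
    show (∫ S, K (β, S) * G S ∂μ) = 0
    have hintS : IntegrableOn (fun S => Real.sqrt (β - S) * G S) (Ioo 0 t) volume := by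
      apply Integrable.bdd_mul (c := Real.sqrt β) hG.restrict
        ((by continuity : Continuous fun S => Real.sqrt (β - S)).aestronglyMeasurable)
      refine (ae_restrict_iff' measurableSet_Ioo).2 (Eventually.of_forall fun S hS => ?_)
      rw [Real.norm_eq_abs, abs_of_nonneg (Real.sqrt_nonneg _)]
      exact Real.sqrt_le_sqrt (by linarith [hS.1])
    have hmulassoc : (fun S => K (β, S) * G S)
        = fun S => Real.sqrt (t - β) * (Real.sqrt (β - S) * G S) := by
      funext S; rw [hK]; ring
    rw [hmulassoc, hμ, integral_const_mul]
    have hsplit : Ioo (0:ℝ) t = Ioo 0 β ∪ Ico β t := (Ioo_union_Ico_eq_Ioo hβ.1 hβ.2.le).symm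
    have hdisj : Disjoint (Ioo (0:ℝ) β) (Ico β t) := by
      rw [Set.disjoint_left]; intro x hx hx'; exact absurd hx.2 (not_lt.2 hx'.1)
    rw [hsplit, setIntegral_union hdisj measurableSet_Ico
      (hintS.mono_set (by rw [hsplit]; exact subset_union_left))
      (hintS.mono_set (by rw [hsplit]; exact subset_union_right))]
    have hzero : ∫ S in Ico β t, Real.sqrt (β - S) * G S = 0 := by
      rw [setIntegral_congr_fun measurableSet_Ico (g := fun _ => (0:ℝ))]
      · simp
      · intro S hS
        show Real.sqrt (β - S) * G S = 0
        rw [Real.sqrt_eq_zero_of_nonpos (by linarith [hS.1]), zero_mul]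
    rw [hzero, h β ⟨hβ.1, hβ.2.le.trans htB⟩, add_zero, mul_zero]
  -- the iterated integral (S outside) equals c times our target
  have hRHS : (∫ S, (∫ β, K (β, S) * G S ∂μ) ∂μ)
      = c * ∫ S in Ioo 0 t, (t - S)^2 * G S := by
    conv_lhs => rw [hμ]
    rw [setIntegral_congr_fun measurableSet_Ioo
      (g := fun S => c * ((t - S)^2 * G S)) ?_]
    · rw [integral_const_mul]
    intro S hS
    show (∫ β, K (β, S) * G S ∂μ) = c * ((t - S) ^ 2 * G S)
    rw [hμ, integral_mul_const]
    have hintB : IntegrableOn (fun β => K (β, S)) (Ioo 0 t) volume := by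
      have : Continuous fun β => K (β, S) :=
        hKcont.comp (continuous_id.prodMk continuous_const)
      exact (this.continuousOn.integrableOn_Icc).mono_set Ioo_subset_Icc_self
    have hsplit : Ioo (0:ℝ) t = Ioc 0 S ∪ Ioo S t := (Ioc_union_Ioo_eq_Ioo hS.1.le hS.2).symm
    have hdisj : Disjoint (Ioc (0:ℝ) S) (Ioo S t) := by
      rw [Set.disjoint_left]; intro x hx hx'; exact absurd hx'.1 (not_lt.2 hx.2)
    rw [hsplit, setIntegral_union hdisj measurableSet_Ioo
      (hintB.mono_set (by rw [hsplit]; exact subset_union_left))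
      (hintB.mono_set (by rw [hsplit]; exact subset_union_right))]
    have hzero : ∫ β in Ioc 0 S, K (β, S) = 0 := by
      rw [setIntegral_congr_fun measurableSet_Ioc (g := fun _ => (0:ℝ))]
      · simp
      · intro β hβ
        show Real.sqrt (t - β) * Real.sqrt (β - S) = 0
        rw [show Real.sqrt (β - S) = 0 from Real.sqrt_eq_zero_of_nonpos (by linarith [hβ.2]),
          mul_zero]
    have hbeta' : ∫ β in Ioo S t, K (β, S) = c * (t - S)^2 := hbeta S t hS.2
    rw [hzero, hbeta', zero_add]
    ring
  rw [hswap, hRHS] at hLHS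
  have := mul_eq_zero.mp hLHS
  rcases this with h' | h'
  · exact absurd h' hc.ne'
  · exact h'

lemma abel_intOn (G : ℝ → ℝ) (hG : Integrable G volume) (φ : ℝ → ℝ) (hφ : Continuous φ)
    (a b : ℝ) : IntegrableOn (fun S => φ S * G S) (Ioo a b) volume := by
  rcases le_or_gt b a with hab | hab
  · rw [Ioo_eq_empty (not_lt.2 hab)]; exact integrableOn_empty
  obtain ⟨C, hC⟩ := (isCompact_Icc (a := a) (b := b)).exists_bound_of_continuousOn
    hφ.continuousOn
  apply Integrable.bdd_mul (c := C) hG.restrict hφ.aestronglyMeasurable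
  refine (ae_restrict_iff' measurableSet_Ioo).2 (Eventually.of_forall fun S hS => ?_)
  exact hC S (Ioo_subset_Icc_self hS)

lemma abel_split (G : ℝ → ℝ) (hG : Integrable G volume) (φ : ℝ → ℝ) (hφ : Continuous φ)
    (t u : ℝ) (h0 : 0 < t) (htu : t ≤ u) :
    ∫ S in Ioo 0 u, φ S * G S
      = (∫ S in Ioo 0 t, φ S * G S) + ∫ S in Ico t u, φ S * G S := by
  have hdisj : Disjoint (Ioo (0:ℝ) t) (Ico t u) := by
    rw [Set.disjoint_left]; intro x hx hx'; exact absurd hx.2 (not_lt.2 hx'.1)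
  rw [← Ioo_union_Ico_eq_Ioo h0 htu]
  exact setIntegral_union hdisj measurableSet_Ico
    (abel_intOn G hG φ hφ 0 t)
    ((abel_intOn G hG φ hφ 0 u).mono_set
      (fun x hx => ⟨h0.trans_le hx.1, hx.2⟩))

lemma abel_bound (G : ℝ → ℝ) (hG : Integrable G volume) (φ : ℝ → ℝ) (hφ : Continuous φ)
    (C t u : ℝ) (h0 : 0 < t) (htu : t ≤ u) (hC : ∀ S ∈ Ico t u, |φ S| ≤ C) :
    |∫ S in Ico t u, φ S * G S| ≤ C * ∫ S in Ico t u, |G S| := by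
  have hint : IntegrableOn (fun S => φ S * G S) (Ico t u) volume :=
    (abel_intOn G hG φ hφ 0 u).mono_set (fun x hx => ⟨h0.trans_le hx.1, hx.2⟩)
  have habs : (fun S : ℝ => |G S|) = fun S => ‖G S‖ := by
    funext S; rw [Real.norm_eq_abs]
  have hintabs : IntegrableOn (fun S => |G S|) (Ico t u) volume := by
    rw [habs]; exact hG.norm.restrict
  calc |∫ S in Ico t u, φ S * G S| ≤ ∫ S in Ico t u, |φ S * G S| := by
        rw [show |∫ S in Ico t u, φ S * G S| = ‖∫ S in Ico t u, φ S * G S‖ from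
          (Real.norm_eq_abs _).symm]
        refine (norm_integral_le_integral_norm _).trans (le_of_eq ?_)
        simp only [Real.norm_eq_abs]
    _ ≤ ∫ S in Ico t u, C * |G S| := by
        apply setIntegral_mono_on hint.abs (hintabs.const_mul C) measurableSet_Ico
        intro S hS
        rw [abs_mul]
        exact mul_le_mul_of_nonneg_right (hC S hS) (abs_nonneg _)
    _ = C * ∫ S in Ico t u, |G S| := integral_const_mul C _

lemma abel_stepA (B : ℝ) (hB : 0 < B) (G : ℝ → ℝ) (hG : Integrable G volume)
    (hQ : ∀ t ∈ Ioc (0:ℝ) B, ∫ S in Ioo 0 t, (t - S)^2 * G S = 0) :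
    ∀ t ∈ Ioo (0:ℝ) B, ∫ S in Ioo 0 t, (t - S) * G S = 0 := by
  intro t ht
  set L := ∫ S in Ioo 0 t, (t - S) * G S with hL
  set A := ∫ S in Ioo 0 t, G S with hA
  set M := ∫ x, |G x| with hM_def
  have hM : 0 ≤ M := integral_nonneg (fun x => abs_nonneg _)
  have key : ∀ δ, 0 < δ → δ ≤ B - t → |2 * L| ≤ δ * (M + |A|) := by
    intro δ hδ hδB
    set u := t + δ with hu
    have e1 := hQ u ⟨by linarith [ht.1], by linarith⟩
    have e2 := hQ t ⟨ht.1, ht.2.le⟩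
    have split := abel_split G hG (fun S => (u - S)^2)
      ((continuous_const.sub continuous_id).pow 2) t u ht.1 (by linarith)
    have efun : (fun S => (u - S)^2 * G S)
        = fun S => (t - S)^2 * G S + ((2*δ) * ((t - S) * G S) + δ^2 * G S) := by
      funext S; rw [hu]; ring
    have expand : ∫ S in Ioo 0 t, (u - S)^2 * G S
        = (∫ S in Ioo 0 t, (t - S)^2 * G S) + ((2*δ) * L + δ^2 * A) := by
      have hi1 : IntegrableOn (fun S => (t - S)^2 * G S) (Ioo 0 t) volume :=
        abel_intOn G hG (fun S => (t-S)^2) ((continuous_const.sub continuous_id).pow 2) 0 t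
      have hi2 : IntegrableOn (fun S => (2*δ) * ((t - S) * G S)) (Ioo 0 t) volume :=
        (abel_intOn G hG (fun S => (t-S)) (continuous_const.sub continuous_id) 0 t).const_mul
          (2*δ)
      have hi3 : IntegrableOn (fun S => δ^2 * G S) (Ioo 0 t) volume :=
        hG.restrict.const_mul (δ^2)
      have hi23 : IntegrableOn (fun S => (2*δ) * ((t - S) * G S) + δ^2 * G S) (Ioo 0 t)
          volume := hi2.add hi3
      rw [efun, integral_add hi1 hi23, integral_add hi2 hi3,
        integral_const_mul, integral_const_mul]
    set R := ∫ S in Ico t u, (u - S)^2 * G S with hR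
    have hzero : (2*δ) * L + δ^2 * A + R = 0 := by
      have : (0:ℝ) = 0 + ((2*δ) * L + δ^2 * A) + R := by
        calc (0:ℝ) = ∫ S in Ioo 0 u, (u - S)^2 * G S := e1.symm
          _ = (∫ S in Ioo 0 t, (u - S)^2 * G S) + R := split
          _ = (∫ S in Ioo 0 t, (t - S)^2 * G S) + ((2*δ) * L + δ^2 * A) + R := by
              rw [expand]
          _ = 0 + ((2*δ) * L + δ^2 * A) + R := by rw [e2]
      linarith
    have hRb : |R| ≤ δ^2 * M := by
      have h1 : |R| ≤ δ^2 * ∫ S in Ico t u, |G S| := by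
        apply abel_bound G hG (fun S => (u - S)^2)
          ((continuous_const.sub continuous_id).pow 2) (δ^2) t u ht.1 (by linarith)
        intro S hS
        rw [abs_of_nonneg (sq_nonneg _), hu]
        nlinarith [hS.1, hS.2]
      have h2 : (∫ S in Ico t u, |G S|) ≤ M := by
        rw [hM_def, show (fun S : ℝ => |G S|) = fun S => ‖G S‖ from
          funext fun S => Real.norm_eq_abs _]
        exact setIntegral_le_integral hG.norm (Eventually.of_forall fun x => norm_nonneg _)
      nlinarith
    have habs : |(2*δ) * L + δ^2 * A| ≤ δ^2 * M := by
      have : (2*δ) * L + δ^2 * A = -R := by linarith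
      rw [this, abs_neg]; exact hRb
    have h3 : |(2*δ) * L| ≤ |(2*δ) * L + δ^2 * A| + |δ^2 * A| := by
      calc |(2*δ) * L| = |((2*δ) * L + δ^2 * A) + (-(δ^2 * A))| := by ring_nf
        _ ≤ |(2*δ) * L + δ^2 * A| + |-(δ^2 * A)| := abs_add_le _ _
        _ = |(2*δ) * L + δ^2 * A| + |δ^2 * A| := by rw [abs_neg]
    have h4 : |(2*δ) * L| = δ * |2 * L| := by
      rw [abs_mul, abs_of_pos (by linarith : (0:ℝ) < 2*δ)]
      rw [show (2*δ : ℝ) = δ * 2 by ring, mul_assoc, abs_mul]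
      rw [abs_of_pos (by norm_num : (0:ℝ) < 2)]
    have h5 : |δ^2 * A| = δ^2 * |A| := by
      rw [abs_mul, abs_of_pos (by positivity : (0:ℝ) < δ^2)]
    nlinarith [abs_nonneg (2*L)]
  have := abel_small (2*L) (M + |A|) (B - t) (by linarith [ht.2]) key
  linarith

lemma abel_stepB (B : ℝ) (hB : 0 < B) (G : ℝ → ℝ) (hG : Integrable G volume)
    (hL : ∀ t ∈ Ioo (0:ℝ) B, ∫ S in Ioo 0 t, (t - S) * G S = 0) :
    ∀ t ∈ Ioo (0:ℝ) B, ∫ S in Ioo 0 t, G S = 0 := by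
  intro t ht
  set A := ∫ S in Ioo 0 t, G S with hA
  refine abel_lim G hG t ((B - t)/2) A (by linarith [ht.2]) ?_
  intro δ hδ hδB
  set u := t + δ with hu
  have huB : u < B := by rw [hu]; linarith [ht.2]
  have e1 := hL u ⟨by linarith [ht.1], huB⟩
  have e2 := hL t ht
  have split := abel_split G hG (fun S => u - S)
    (continuous_const.sub continuous_id) t u ht.1 (by linarith)
  have efun : (fun S => (u - S) * G S) = fun S => (t - S) * G S + δ * G S := by
    funext S; rw [hu]; ring
  have expand : ∫ S in Ioo 0 t, (u - S) * G S
      = (∫ S in Ioo 0 t, (t - S) * G S) + δ * A := by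
    have hi1 : IntegrableOn (fun S => (t - S) * G S) (Ioo 0 t) volume :=
      abel_intOn G hG (fun S => (t-S)) (continuous_const.sub continuous_id) 0 t
    have hi2 : IntegrableOn (fun S => δ * G S) (Ioo 0 t) volume := hG.restrict.const_mul δ
    rw [efun, integral_add hi1 hi2, integral_const_mul]
  set R := ∫ S in Ico t u, (u - S) * G S with hR
  have hzero : δ * A + R = 0 := by
    have : (0:ℝ) = 0 + δ * A + R := by
      calc (0:ℝ) = ∫ S in Ioo 0 u, (u - S) * G S := e1.symm
        _ = (∫ S in Ioo 0 t, (u - S) * G S) + R := split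
        _ = (∫ S in Ioo 0 t, (t - S) * G S) + δ * A + R := by rw [expand]
        _ = 0 + δ * A + R := by rw [e2]
    linarith
  have hRb : |R| ≤ δ * ∫ S in Ico t u, |G S| := by
    apply abel_bound G hG (fun S => u - S) (continuous_const.sub continuous_id) δ t u ht.1
      (by linarith)
    intro S hS
    rw [abs_of_nonneg (by linarith [hS.2] : (0:ℝ) ≤ u - S), hu]
    linarith [hS.1]
  have : |δ * A| ≤ δ * ∫ S in Ico t u, |G S| := by
    have he : δ * A = -R := by linarith
    rw [he, abs_neg]; exact hRb
  rw [abs_mul, abs_of_pos hδ] at this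
  have hfin : |A| ≤ ∫ S in Ico t u, |G S| := le_of_mul_le_mul_left this hδ
  rw [integral_Ico_eq_integral_Ioo] at hfin
  rw [hu] at hfin
  exact hfin

lemma abel_ofReal_posPart (x : ℝ) : ENNReal.ofReal x = ENNReal.ofReal (max x 0) := by
  rcases le_total x 0 with h | h
  · rw [ENNReal.ofReal_of_nonpos h, max_eq_right h]; simp
  · rw [max_eq_left h]

lemma abel_final (B : ℝ) (hB : 0 < B) (g G : ℝ → ℝ) (hGm : StronglyMeasurable G)
    (hG : Integrable G volume)
    (hGae : (Ioo (0:ℝ) B).indicator g =ᵐ[volume] G)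
    (hA : ∀ t ∈ Ioo (0:ℝ) B, ∫ S in Ioo 0 t, G S = 0) :
    ∀ᵐ x ∂(volume.restrict (Ioo 0 B)), g x = 0 := by
  have hAB : ∫ S in Ioo 0 B, G S = 0 := by
    have hmem : ∀ n : ℕ, B - B / (n + 2) ∈ Ioo (0:ℝ) B := by
      intro n
      have h1 : (0:ℝ) < B / (n + 2) := by positivity
      have h2 : B / (n + 2) < B := by
        rw [div_lt_iff₀ (by positivity)]
        nlinarith [Nat.cast_nonneg (α := ℝ) n]
      exact ⟨by linarith, by linarith⟩
    have htend : Tendsto (fun n : ℕ => ∫ S in Ioo 0 (B - B / (n + 2)), G S) atTop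
        (𝓝 (∫ S in Ioo 0 B, G S)) := by
      simp only [← integral_indicator measurableSet_Ioo]
      apply tendsto_integral_of_dominated_convergence (bound := fun x => ‖G x‖)
      · exact fun n => hGm.aestronglyMeasurable.indicator measurableSet_Ioo
      · exact hG.norm
      · exact fun n => Eventually.of_forall fun x => norm_indicator_le_norm_self _ _
      · refine Eventually.of_forall fun x => ?_
        by_cases hx : x ∈ Ioo (0:ℝ) B
        · have : ∀ᶠ n : ℕ in atTop, (Ioo (0:ℝ) (B - B / (n + 2))).indicator G x
              = (Ioo (0:ℝ) B).indicator G x := by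
            have hto : Tendsto (fun n : ℕ => B - B / (n + 2)) atTop (𝓝 B) := by
              have : Tendsto (fun n : ℕ => B / (n + 2)) atTop (𝓝 0) :=
                (tendsto_const_div_atTop_nhds_zero_nat B).comp (tendsto_add_atTop_nat 2)
                  |>.congr (fun n => by norm_num)
              simpa using tendsto_const_nhds.sub this
            filter_upwards [hto.eventually (eventually_gt_nhds hx.2)] with n hn
            rw [indicator_of_mem (mem_Ioo.mpr ⟨hx.1, hn⟩), indicator_of_mem hx]
          exact Tendsto.congr' (this.mono fun n hn => hn.symm) tendsto_const_nhds
        · refine tendsto_const_nhds.congr fun n => ?_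
          have hx' : x ∉ Ioo (0:ℝ) (B - B / (n + 2)) := by
            intro hm
            exact hx ⟨hm.1, hm.2.trans (hmem n).2⟩
          rw [indicator_of_notMem hx, indicator_of_notMem hx']
    have hzero : ∀ n : ℕ, ∫ S in Ioo 0 (B - B / (n + 2)), G S = 0 :=
      fun n => hA _ (hmem n)
    exact tendsto_nhds_unique (htend.congr hzero) tendsto_const_nhds
  have hJ : ∀ u : ℝ, ∫ x in (0:ℝ)..u, G x = 0 := by
    intro u
    rcases lt_trichotomy u 0 with hu | hu | hu
    · rw [intervalIntegral.integral_symm, intervalIntegral.integral_of_le hu.le,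
        neg_eq_zero]
      rw [setIntegral_congr_ae measurableSet_Ioc
        (g := fun _ => (0:ℝ)) (hGae.symm.mono fun x hx hmem => by
          rw [hx, indicator_of_notMem]
          intro hm; exact absurd hmem.2 (not_le.2 hm.1))]
      simp
    · simp [hu]
    · rw [intervalIntegral.integral_of_le hu.le, integral_Ioc_eq_integral_Ioo]
      rcases lt_or_ge u B with huB | huB
      · exact hA u ⟨hu, huB⟩
      · have hsplit : Ioo (0:ℝ) u = Ioo 0 B ∪ Ico B u :=
          (Ioo_union_Ico_eq_Ioo hB huB).symm
        have hdisj : Disjoint (Ioo (0:ℝ) B) (Ico B u) := by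
          rw [Set.disjoint_left]; intro x hx hx'; exact absurd hx.2 (not_lt.2 hx'.1)
        rw [hsplit, setIntegral_union hdisj measurableSet_Ico hG.restrict hG.restrict, hAB,
          zero_add]
        rw [setIntegral_congr_ae measurableSet_Ico
          (g := fun _ => (0:ℝ)) (hGae.symm.mono fun x hx hmem => by
            rw [hx, indicator_of_notMem]
            intro hm; exact absurd hmem.1 (not_le.2 hm.2))]
        simp
  have hIoc : ∀ a b : ℝ, a < b → ∫ x in Ioc a b, G x = 0 := by
    intro a b hab
    rw [← intervalIntegral.integral_of_le hab.le,
      ← intervalIntegral.integral_interval_sub_left hG.intervalIntegrable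
        hG.intervalIntegrable, hJ, hJ, sub_zero]
  have hPint : Integrable (fun x => max (G x) 0) volume := hG.pos_part
  have hNint : Integrable (fun x => max (-G x) 0) volume := hG.neg.pos_part
  set μp := volume.withDensity (fun x => ENNReal.ofReal (G x)) with hμp
  set μm := volume.withDensity (fun x => ENNReal.ofReal (-G x)) with hμm
  haveI : IsFiniteMeasure μp := isFiniteMeasure_withDensity_ofReal hG.2
  haveI : IsFiniteMeasure μm := isFiniteMeasure_withDensity_ofReal hG.neg.2
  have hext : μp = μm := by
    apply Measure.ext_of_Ioc
    intro a b hab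
    rw [hμp, hμm, withDensity_apply _ measurableSet_Ioc,
      withDensity_apply _ measurableSet_Ioc]
    have e1 : ∫⁻ x in Ioc a b, ENNReal.ofReal (G x)
        = ∫⁻ x in Ioc a b, ENNReal.ofReal (max (G x) 0) :=
      lintegral_congr fun x => abel_ofReal_posPart _
    have e2 : ∫⁻ x in Ioc a b, ENNReal.ofReal (-G x)
        = ∫⁻ x in Ioc a b, ENNReal.ofReal (max (-G x) 0) :=
      lintegral_congr fun x => abel_ofReal_posPart _
    rw [e1, e2,
      ← ofReal_integral_eq_lintegral_ofReal hPint.restrict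
        (Eventually.of_forall fun x => le_max_right _ _),
      ← ofReal_integral_eq_lintegral_ofReal hNint.restrict
        (Eventually.of_forall fun x => le_max_right _ _)]
    have heq : (∫ x in Ioc a b, max (G x) 0) = ∫ x in Ioc a b, max (-G x) 0 := by
      have hsub : (∫ x in Ioc a b, max (G x) 0) - ∫ x in Ioc a b, max (-G x) 0 = 0 := by
        rw [← integral_sub hPint.restrict hNint.restrict,
          show (fun x => max (G x) 0 - max (-G x) 0) = G from
            funext fun x => max_zero_sub_eq_self (G x)]
        exact hIoc a b hab
      linarith
    rw [heq]
  have hae : (fun x => ENNReal.ofReal (G x)) =ᵐ[volume] fun x => ENNReal.ofReal (-G x) := by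
    refine (withDensity_eq_iff_of_sigmaFinite ?_ ?_).1 hext
    · exact (hGm.measurable.ennreal_ofReal).aemeasurable
    · exact (hGm.measurable.neg.ennreal_ofReal).aemeasurable
  have hG0 : ∀ᵐ x ∂(volume : Measure ℝ), G x = 0 := by
    filter_upwards [hae] with x hx
    rcases lt_trichotomy (G x) 0 with h | h | h
    · exfalso
      rw [ENNReal.ofReal_of_nonpos h.le] at hx
      exact absurd hx.symm (ENNReal.ofReal_pos.2 (by linarith)).ne'
    · exact h
    · exfalso
      rw [ENNReal.ofReal_of_nonpos (by linarith : -G x ≤ 0)] at hx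
      exact absurd hx (ENNReal.ofReal_pos.2 h).ne'
  have h1 : ∀ᵐ x ∂(volume : Measure ℝ), (Ioo (0:ℝ) B).indicator g x = 0 := by
    filter_upwards [hGae, hG0] with x h1 h2
    rw [h1, h2]
  filter_upwards [ae_restrict_of_ae h1, ae_restrict_mem measurableSet_Ioo] with x hx hmem
  rwa [indicator_of_mem hmem] at hx

/-- Injectivity of the Abel transform `J^{3/2}`: if `g` is integrable on `(0,B)` and
`∫_0^β (β-S)^{1/2} g(S) dS = 0` for every `β ∈ (0,B]`, then `g = 0` a.e. on `(0,B)`. -/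
theorem abel_transform_injective
    (B : ℝ) (hB : 0 < B) (g : ℝ → ℝ) (hg : IntegrableOn g (Ioo 0 B))
    (h : ∀ β ∈ Ioc (0 : ℝ) B, ∫ S in Ioo 0 β, Real.sqrt (β - S) * g S = 0) :
    ∀ᵐ x ∂(volume.restrict (Ioo 0 B)), g x = 0 := by
  set g0 := (Ioo (0:ℝ) B).indicator g with hg0
  have hg0int : Integrable g0 volume := (integrable_indicator_iff measurableSet_Ioo).2 hg
  set G := hg0int.1.mk g0 with hG_def
  have hGm : StronglyMeasurable G := hg0int.1.stronglyMeasurable_mk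
  have hGae : g0 =ᵐ[volume] G := hg0int.1.ae_eq_mk
  have hGint : Integrable G volume := hg0int.congr hGae
  have h' : ∀ β ∈ Ioc (0:ℝ) B, ∫ S in Ioo 0 β, Real.sqrt (β - S) * G S = 0 := by
    intro β hβ
    have e1 : ∫ S in Ioo 0 β, Real.sqrt (β - S) * G S
        = ∫ S in Ioo 0 β, Real.sqrt (β - S) * g0 S :=
      integral_congr_ae (ae_restrict_of_ae (hGae.mono fun x hx => by
        show Real.sqrt (β - x) * G x = Real.sqrt (β - x) * g0 x
        rw [hx]))
    have e2 : ∫ S in Ioo 0 β, Real.sqrt (β - S) * g0 S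
        = ∫ S in Ioo 0 β, Real.sqrt (β - S) * g S := by
      apply setIntegral_congr_fun measurableSet_Ioo
      intro S hS
      show Real.sqrt (β - S) * (Ioo (0:ℝ) B).indicator g S = Real.sqrt (β - S) * g S
      rw [indicator_of_mem (mem_Ioo.mpr ⟨hS.1, hS.2.trans_le hβ.2⟩)]
    rw [e1, e2]
    exact h β hβ
  obtain ⟨c, hc, hbeta⟩ := abel_beta_aux
  have hQ := abel_fubini B hB G hGm hGint h' c hc hbeta
  have hL := abel_stepA B hB G hGint hQ
  have hA := abel_stepB B hB G hGint hL
  exact abel_final B hB g G hGm hGint hGae hA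
end

section
/- Let α ≠ 0 and let v : (−1,1) → ℝ be C¹, positive, with v(0) = c > 0, v' < 0 on (−1,0), v' > 0 on (0,1), and v(x) → +∞ as x → ±1. Let f₁(s) denote the unique x ∈ (0,1) with v(x) = s and f₂(s) the unique x ∈ (0,1) with v(−x) = s, for s > c. Let λ > α²c and set β = λ/α² − c. Then the two-dimensional Lebesgue measure of {(x,ξ) : x ∈ (−1,1), ξ > 0, ξ²/v(x) + α²v(x) < λ} equals |α| · ∫_0^β √(β − S) · √(S + c) · (f₁'(S + c) + f₂'(S + c)) dS. -/
open Set MeasureTheory Filter Topology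

/-!
Over each `x` the slice of the region is the interval `0 < ξ < √(v x (λ - α² v x))`, so the area
is the integral of this width over `(-1, 1)`. Folding `(-1, 0)` onto `(0, 1)` and substituting
`s = v x` on each half, i.e. `x = fᵢ s` with `dx = fᵢ' s ds`, gives
`∫_{s > c} (f₁' s + f₂' s) √(s (λ - α² s)) ds`. Since `√(s (λ - α² s)) = |α| √(λ/α² - s) √s`
vanishes for `s ≥ λ/α²`, the shift `s = S + c` yields the Abel transform.
The substitution is the change of variables for injective maps on measurable sets, which applies
directly to the unbounded set `s > c`, so no limit of proper integrals is needed.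
-/

section ChangeOfVariables

variable {E : Type*} [NormedAddCommGroup E] [NormedSpace ℝ E] {u f : ℝ → ℝ} {I J : Set ℝ}

theorem hasDerivAt_of_leftInvOn (hI : IsOpen I) (hJ : IsOpen J) (hu : ContDiffOn ℝ 1 u I)
    (hinj : InjOn u I) (hf : MapsTo f J I) (hfu : LeftInvOn u f J) {s : ℝ} (hs : s ∈ J)
    (hu' : deriv u (f s) ≠ 0) : HasDerivAt f (deriv u (f s))⁻¹ s := by
  have hus : ContDiffAt ℝ 1 u (f s) := hu.contDiffAt (hI.mem_nhds (hf hs))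
  have hJ_near : ∀ᶠ x in 𝓝 (f s), u x ∈ J :=
    hus.continuousAt.eventually_mem (by rw [hfu hs]; exact hJ.mem_nhds hs)
  have hleft : ∀ᶠ x in 𝓝 (f s), f (u x) = x := by
    filter_upwards [hI.mem_nhds (hf hs), hJ_near] with x hxI hxJ
    exact hinj (hf hxJ) hxI (hfu hxJ)
  simpa only [hfu hs] using
    ((hus.hasStrictDerivAt one_ne_zero).to_local_left_inverse hu' hleft).hasDerivAt

theorem integrableOn_comp_iff_of_leftInvOn (hI : IsOpen I) (hJ : IsOpen J)
    (hu : ContDiffOn ℝ 1 u I) (hu' : ∀ x ∈ I, 0 < deriv u x) (hinj : InjOn u I)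
    (huJ : MapsTo u I J) (hf : MapsTo f J I) (hfu : LeftInvOn u f J) (h : ℝ → E) :
    IntegrableOn (fun x => h (u x)) I ↔ IntegrableOn (fun s => deriv f s • h s) J := by
  have hbij : BijOn f J I := InvOn.bijOn ⟨hfu, hinj.rightInvOn_of_leftInvOn hfu huJ hf⟩ hf huJ
  have hf' (s) (hs : s ∈ J) : HasDerivAt f (deriv u (f s))⁻¹ s :=
    hasDerivAt_of_leftInvOn hI hJ hu hinj hf hfu hs (hu' _ (hf hs)).ne'
  rw [← hbij.image_eq, integrableOn_image_iff_integrableOn_abs_deriv_smul hJ.measurableSet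
    (fun s hs => (hf' s hs).hasDerivWithinAt) hbij.injOn]
  refine integrableOn_congr_fun (fun s hs => ?_) hJ.measurableSet
  rw [(hf' s hs).deriv, abs_of_pos (inv_pos.2 (hu' _ (hf hs))), hfu hs]

theorem integral_comp_eq_of_leftInvOn (hI : IsOpen I) (hJ : IsOpen J)
    (hu : ContDiffOn ℝ 1 u I) (hu' : ∀ x ∈ I, 0 < deriv u x) (hinj : InjOn u I)
    (huJ : MapsTo u I J) (hf : MapsTo f J I) (hfu : LeftInvOn u f J) (h : ℝ → E) :
    ∫ x in I, h (u x) = ∫ s in J, deriv f s • h s := by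
  have hbij : BijOn f J I := InvOn.bijOn ⟨hfu, hinj.rightInvOn_of_leftInvOn hfu huJ hf⟩ hf huJ
  have hf' (s) (hs : s ∈ J) : HasDerivAt f (deriv u (f s))⁻¹ s :=
    hasDerivAt_of_leftInvOn hI hJ hu hinj hf hfu hs (hu' _ (hf hs)).ne'
  rw [← hbij.image_eq, integral_image_eq_integral_abs_deriv_smul hJ.measurableSet
    (fun s hs => (hf' s hs).hasDerivWithinAt) hbij.injOn]
  refine setIntegral_congr_fun hJ.measurableSet (fun s hs => ?_)
  rw [(hf' s hs).deriv, abs_of_pos (inv_pos.2 (hu' _ (hf hs))), hfu hs]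

theorem integral_Ioo_comp_eq_integral_Ioi_deriv_smul {a b c : ℝ} (hu : ContDiffOn ℝ 1 u (Ico a b))
    (hu' : ∀ x ∈ Ioo a b, 0 < deriv u x) (hua : u a = c) (hf : MapsTo f (Ioi c) (Ioo a b))
    (hfu : LeftInvOn u f (Ioi c)) (h : ℝ → E) :
    (IntegrableOn (fun x => h (u x)) (Ioo a b) ↔
        IntegrableOn (fun s => deriv f s • h s) (Ioi c)) ∧
      ∫ x in Ioo a b, h (u x) = ∫ s in Ioi c, deriv f s • h s := by
  have hmono : StrictMonoOn u (Ico a b) :=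
    strictMonoOn_of_deriv_pos (convex_Ico a b) hu.continuousOn (by rwa [interior_Ico])
  have huJ : MapsTo u (Ioo a b) (Ioi c) := fun x hx =>
    hua ▸ hmono (left_mem_Ico.2 (hx.1.trans hx.2)) (Ioo_subset_Ico_self hx) hx.1
  have hinj : InjOn u (Ioo a b) := hmono.injOn.mono Ioo_subset_Ico_self
  have hu₀ := hu.mono Ioo_subset_Ico_self
  exact ⟨integrableOn_comp_iff_of_leftInvOn isOpen_Ioo isOpen_Ioi hu₀ hu' hinj huJ hf hfu h,
    integral_comp_eq_of_leftInvOn isOpen_Ioo isOpen_Ioi hu₀ hu' hinj huJ hf hfu h⟩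

theorem integral_Ioo_comp_add_right (g : ℝ → E) (a b d : ℝ) :
    ∫ x in Ioo a b, g (x + d) = ∫ x in Ioo (a + d) (b + d), g x := by
  simpa [image_add_const_Ioo] using (integral_image_eq_integral_abs_deriv_smul measurableSet_Ioo
    (fun x _ => ((hasDerivAt_id x).add_const d).hasDerivWithinAt) (add_left_injective d).injOn
    g).symm

theorem integral_Ioo_neg_eq_add_integral_comp_neg {g : ℝ → E} {a : ℝ} (ha : 0 < a)
    (hg : IntegrableOn g (Ioo (-a) a)) :
    ∫ x in Ioo (-a) a, g x = (∫ x in Ioo 0 a, g x) + ∫ x in Ioo 0 a, g (-x) := by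
  have hrefl : ∫ x in Ioc (-a) 0, g x = ∫ x in Ioo 0 a, g (-x) := by
    rw [← intervalIntegral.integral_of_le (neg_nonpos.2 ha.le), ← integral_Ioc_eq_integral_Ioo,
      ← intervalIntegral.integral_of_le ha.le, intervalIntegral.integral_comp_neg, neg_zero]
  rw [← Ioc_union_Ioo_eq_Ioo (neg_nonpos.2 ha.le) ha, setIntegral_union
    (disjoint_left.2 fun x h₁ h₂ => h₂.1.not_ge h₁.2) measurableSet_Ioo
    (hg.mono_set fun x hx => ⟨hx.1, hx.2.trans_lt ha⟩)
    (hg.mono_set (Ioo_subset_Ioo_left (neg_nonpos.2 ha.le))), hrefl, add_comm]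

end ChangeOfVariables

section LevelSet

variable {α lam : ℝ}

theorem sqrt_mul_sub_le (hα : α ≠ 0) (s : ℝ) :
    √(s * (lam - α ^ 2 * s)) ≤ √(lam ^ 2 / (4 * α ^ 2)) := by
  gcongr
  rw [le_div_iff₀ (by positivity)]
  nlinarith [sq_nonneg (lam - 2 * α ^ 2 * s)]

theorem integrableOn_sqrt_mul_sub {X : Type*} [MeasurableSpace X] {μ : Measure X} {v : X → ℝ}
    {I : Set X} (hα : α ≠ 0) (hI : μ I ≠ ⊤) (hv : AEStronglyMeasurable v (μ.restrict I)) :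
    IntegrableOn (fun x => √(v x * (lam - α ^ 2 * v x))) I μ := by
  have hW : Continuous fun s : ℝ => √(s * (lam - α ^ 2 * s)) := by fun_prop
  refine ⟨hW.comp_aestronglyMeasurable hv,
    .restrict_of_bounded (C := √(lam ^ 2 / (4 * α ^ 2))) hI.lt_top (ae_of_all _ fun x => ?_)⟩
  rw [Real.norm_of_nonneg (Real.sqrt_nonneg _)]
  exact sqrt_mul_sub_le hα _

theorem volume_setOf_sq_div_add_lt_eq_integral {v : ℝ → ℝ} {I : Set ℝ} (hα : α ≠ 0)
    (hI : MeasurableSet I) (hI_fin : volume I ≠ ⊤) (hv : AEStronglyMeasurable v (volume.restrict I))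
    (hv_pos : ∀ x ∈ I, 0 < v x) :
    (volume {p : ℝ × ℝ | p.1 ∈ I ∧ 0 < p.2 ∧ p.2 ^ 2 / v p.1 + α ^ 2 * v p.1 < lam}).toReal
      = ∫ x in I, √(v x * (lam - α ^ 2 * v x)) := by
  have hregion : {p : ℝ × ℝ | p.1 ∈ I ∧ 0 < p.2 ∧ p.2 ^ 2 / v p.1 + α ^ 2 * v p.1 < lam}
      = regionBetween (fun _ => 0) (fun x => √(v x * (lam - α ^ 2 * v x))) I := by
    ext ⟨x, ξ⟩
    simp only [regionBetween, mem_ofPred_eq, mem_Ioo]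
    refine and_congr_right fun hx => and_congr_right fun hξ => ?_
    rw [Real.lt_sqrt hξ.le, div_add' _ _ _ (hv_pos x hx).ne', div_lt_iff₀ (hv_pos x hx)]
    constructor <;> intro h <;> nlinarith
  rw [hregion, Measure.volume_eq_prod, volume_regionBetween_eq_integral integrableOn_zero
    (integrableOn_sqrt_mul_sub hα hI_fin hv) hI fun x _ => Real.sqrt_nonneg _,
    ENNReal.toReal_ofReal (setIntegral_nonneg hI fun x _ => by simp)]
  simp

theorem sqrt_mul_sub_eq (hα : α ≠ 0) {s : ℝ} (hs : 0 ≤ s) :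
    √(s * (lam - α ^ 2 * s)) = |α| * √(lam / α ^ 2 - s) * √s := by
  have h : s * (lam - α ^ 2 * s) = α ^ 2 * (lam / α ^ 2 - s) * s := by
    field_simp
  rw [h, Real.sqrt_mul' _ hs, Real.sqrt_mul (sq_nonneg α), Real.sqrt_sq_eq_abs]

theorem integral_Ioi_mul_sqrt_mul_sub_eq (hα : α ≠ 0) {c : ℝ} (hc : 0 ≤ c) (F : ℝ → ℝ) :
    ∫ s in Ioi c, F s * √(s * (lam - α ^ 2 * s))
      = |α| * ∫ S in Ioo 0 (lam / α ^ 2 - c), √(lam / α ^ 2 - c - S) * √(S + c) * F (S + c) := by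
  calc ∫ s in Ioi c, F s * √(s * (lam - α ^ 2 * s))
      = ∫ s in Ioi c, |α| * (√(lam / α ^ 2 - s) * √s * F s) :=
        setIntegral_congr_fun measurableSet_Ioi fun s hs => by
          rw [sqrt_mul_sub_eq hα (hc.trans hs.le)]; ring
    _ = ∫ s in Ioo c (lam / α ^ 2), |α| * (√(lam / α ^ 2 - s) * √s * F s) := by
        refine setIntegral_eq_of_subset_of_forall_sdiff_eq_zero measurableSet_Ioi
          Ioo_subset_Ioi_self fun s hs => ?_
        have hs' : lam / α ^ 2 ≤ s := not_lt.1 fun h => hs.2 ⟨hs.1, h⟩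
        rw [Real.sqrt_eq_zero'.2 (sub_nonpos.2 hs')]
        ring
    _ = |α| * ∫ S in Ioo 0 (lam / α ^ 2 - c), √(lam / α ^ 2 - (S + c)) * √(S + c) * F (S + c) := by
        rw [integral_const_mul, integral_Ioo_comp_add_right
          (fun s => √(lam / α ^ 2 - s) * √s * F s), zero_add, sub_add_cancel]
    _ = |α| * ∫ S in Ioo 0 (lam / α ^ 2 - c), √(lam / α ^ 2 - c - S) * √(S + c) * F (S + c) := by
        simp_rw [sub_sub, add_comm c]

end LevelSet

theorem area_as_abel_transform_of_sum_of_inverse_branches_general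
    (α c : ℝ) (hα : α ≠ 0) (hc : 0 < c) (v : ℝ → ℝ)
    (hv_diff : ContDiffOn ℝ 1 v (Ioo (-1) 1))
    (hv_pos : ∀ x ∈ Ioo (-1 : ℝ) 1, 0 < v x)
    (hv0 : v 0 = c)
    (hv_deriv_neg : ∀ x ∈ Ioo (-1 : ℝ) 0, deriv v x < 0)
    (hv_deriv_pos : ∀ x ∈ Ioo (0 : ℝ) 1, 0 < deriv v x)
    (f₁ f₂ : ℝ → ℝ)
    (hf₁_mem : ∀ s ∈ Ioi c, f₁ s ∈ Ioo (0 : ℝ) 1)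
    (hf₁_inv : ∀ s ∈ Ioi c, v (f₁ s) = s)
    (hf₂_mem : ∀ s ∈ Ioi c, f₂ s ∈ Ioo (0 : ℝ) 1)
    (hf₂_inv : ∀ s ∈ Ioi c, v (-(f₂ s)) = s)
    (lam : ℝ) :
    (volume {p : ℝ × ℝ | p.1 ∈ Ioo (-1 : ℝ) 1 ∧ 0 < p.2 ∧
        p.2 ^ 2 / v p.1 + α ^ 2 * v p.1 < lam}).toReal
      = |α| * ∫ S in Ioo (0 : ℝ) (lam / α ^ 2 - c),
          Real.sqrt (lam / α ^ 2 - c - S) * Real.sqrt (S + c) *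
            (deriv f₁ (S + c) + deriv f₂ (S + c)) := by
  set W : ℝ → ℝ := fun s => √(s * (lam - α ^ 2 * s))
  have hv₁ : ContDiffOn ℝ 1 v (Ico 0 1) := hv_diff.mono (Ico_subset_Ioo_left (by norm_num))
  have hv₂ : ContDiffOn ℝ 1 (fun x => v (-x)) (Ico 0 1) :=
    hv_diff.comp contDiff_neg.contDiffOn fun x hx => ⟨by linarith [hx.2], by linarith [hx.1]⟩
  have hv₂' (x) (hx : x ∈ Ioo (0 : ℝ) 1) : 0 < deriv (fun x => v (-x)) x := by
    rw [deriv_comp_neg]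
    linarith [hv_deriv_neg (-x) ⟨by linarith [hx.2], by linarith [hx.1]⟩]
  have hW_int {u : ℝ → ℝ} (hu : ContDiffOn ℝ 1 u (Ico 0 1)) :
      IntegrableOn (fun x => W (u x)) (Ioo 0 1) :=
    integrableOn_sqrt_mul_sub hα measure_Ioo_lt_top.ne
      ((hu.continuousOn.mono Ioo_subset_Ico_self).aestronglyMeasurable measurableSet_Ioo)
  obtain ⟨hint₁, heq₁⟩ := integral_Ioo_comp_eq_integral_Ioi_deriv_smul hv₁ hv_deriv_pos hv0
    hf₁_mem hf₁_inv W
  obtain ⟨hint₂, heq₂⟩ := integral_Ioo_comp_eq_integral_Ioi_deriv_smul hv₂ hv₂'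
    (by simpa using hv0) hf₂_mem hf₂_inv W
  calc _ = ∫ x in Ioo (-1) 1, W (v x) :=
        volume_setOf_sq_div_add_lt_eq_integral hα measurableSet_Ioo measure_Ioo_lt_top.ne
          (hv_diff.continuousOn.aestronglyMeasurable measurableSet_Ioo) hv_pos
    _ = (∫ x in Ioo 0 1, W (v x)) + ∫ x in Ioo 0 1, W (v (-x)) :=
        integral_Ioo_neg_eq_add_integral_comp_neg one_pos (integrableOn_sqrt_mul_sub hα
          measure_Ioo_lt_top.ne (hv_diff.continuousOn.aestronglyMeasurable measurableSet_Ioo))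
    _ = ∫ s in Ioi c, (deriv f₁ s + deriv f₂ s) * W s := by
        rw [heq₁, heq₂, ← integral_add (hint₁.1 (hW_int hv₁)) (hint₂.1 (hW_int hv₂))]
        simp_rw [smul_eq_mul, add_mul]
    _ = _ := integral_Ioi_mul_sqrt_mul_sub_eq hα hc.le _

/-- For a positive C¹ single well `v` on `(-1,1)` with minimum value `c = v(0)`, inverse
branches `f₁` (right) and `f₂` (left), and `λ > α²c` with `β = λ/α² - c`, the area of
`{(x,ξ) : x ∈ (-1,1), ξ > 0, ξ²/v(x) + α²v(x) < λ}` equals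
`|α| ∫_0^β √(β-S) √(S+c) (f₁'(S+c) + f₂'(S+c)) dS`. -/
theorem area_as_abel_transform_of_sum_of_inverse_branches
    (α c : ℝ) (hα : α ≠ 0) (hc : 0 < c) (v : ℝ → ℝ)
    (hv_diff : ContDiffOn ℝ 1 v (Ioo (-1) 1))
    (hv_pos : ∀ x ∈ Ioo (-1 : ℝ) 1, 0 < v x)
    (hv0 : v 0 = c)
    (hv_deriv_neg : ∀ x ∈ Ioo (-1 : ℝ) 0, deriv v x < 0)
    (hv_deriv_pos : ∀ x ∈ Ioo (0 : ℝ) 1, 0 < deriv v x)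
    (hv_left : Tendsto v (𝓝[>] (-1 : ℝ)) atTop)
    (hv_right : Tendsto v (𝓝[<] (1 : ℝ)) atTop)
    (f₁ f₂ : ℝ → ℝ)
    (hf₁_mem : ∀ s ∈ Ioi c, f₁ s ∈ Ioo (0 : ℝ) 1)
    (hf₁_inv : ∀ s ∈ Ioi c, v (f₁ s) = s)
    (hf₂_mem : ∀ s ∈ Ioi c, f₂ s ∈ Ioo (0 : ℝ) 1)
    (hf₂_inv : ∀ s ∈ Ioi c, v (-(f₂ s)) = s)
    (lam : ℝ) (hlam : α ^ 2 * c < lam) :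
    (volume {p : ℝ × ℝ | p.1 ∈ Ioo (-1 : ℝ) 1 ∧ 0 < p.2 ∧
        p.2 ^ 2 / v p.1 + α ^ 2 * v p.1 < lam}).toReal
      = |α| * ∫ S in Ioo (0 : ℝ) (lam / α ^ 2 - c),
          Real.sqrt (lam / α ^ 2 - c - S) * Real.sqrt (S + c) *
            (deriv f₁ (S + c) + deriv f₂ (S + c)) :=
  area_as_abel_transform_of_sum_of_inverse_branches_general α c hα hc v hv_diff hv_pos hv0
    hv_deriv_neg hv_deriv_pos f₁ f₂ hf₁_mem hf₁_inv hf₂_mem hf₂_inv lam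
end

section
/- Let α ≠ 0, c > 0, and let v : (−1,1) → ℝ be continuous with v(x) ≥ c for all x and v(0) = c. For λ ∈ ℝ let E_λ = {(x,ξ) ∈ (−1,1) × ℝ : ξ²/v(x) + α²v(x) < λ}. Then the two-dimensional Lebesgue measure of E_λ is zero if λ ≤ α²c, and is strictly positive if λ > α²c. -/
open Set MeasureTheory

/-- The area of the sublevel region `E_λ = {(x,ξ) : ξ²/v(x) + α²v(x) < λ}` vanishes exactly for
`λ ≤ α²c`, where `c = v(0)` is the minimum value of `v ≥ c` on `(-1,1)`. -/
theorem sublevel_area_positive_iff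
    (α c : ℝ) (hα : α ≠ 0) (hc : 0 < c) (v : ℝ → ℝ)
    (hv_cont : ContinuousOn v (Ioo (-1) 1))
    (hv_ge : ∀ x ∈ Ioo (-1 : ℝ) 1, c ≤ v x)
    (hv0 : v 0 = c) (L : ℝ) :
    (L ≤ α ^ 2 * c →
      volume {p : ℝ × ℝ | p.1 ∈ Ioo (-1 : ℝ) 1 ∧
        p.2 ^ 2 / v p.1 + α ^ 2 * v p.1 < L} = 0) ∧
    (α ^ 2 * c < L →
      0 < volume {p : ℝ × ℝ | p.1 ∈ Ioo (-1 : ℝ) 1 ∧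
        p.2 ^ 2 / v p.1 + α ^ 2 * v p.1 < L}) := by
  have hα2 : 0 < α ^ 2 := pow_two_pos_of_ne_zero hα
  constructor
  · intro hL
    have : {p : ℝ × ℝ | p.1 ∈ Ioo (-1 : ℝ) 1 ∧
        p.2 ^ 2 / v p.1 + α ^ 2 * v p.1 < L} = ∅ := by
      ext p
      simp only [mem_setOf_eq, mem_empty_iff_false, iff_false, not_and]
      intro hx hlt
      have hv := hv_ge _ hx
      have hvpos : 0 < v p.1 := hc.trans_le hv
      have h1 : 0 ≤ p.2 ^ 2 / v p.1 := div_nonneg (sq_nonneg _) hvpos.le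
      have h2 : α ^ 2 * c ≤ α ^ 2 * v p.1 := by nlinarith
      linarith
    rw [this, measure_empty]
  · intro hL
    set δ := L - α ^ 2 * c with hδdef
    have hδ : 0 < δ := sub_pos.mpr hL
    have hq : 0 < δ / (2 * α ^ 2) := by positivity
    have ht : v 0 < c + δ / (2 * α ^ 2) := by rw [hv0]; linarith
    have hca : ContinuousAt v 0 :=
      hv_cont.continuousAt (Ioo_mem_nhds (by norm_num) (by norm_num))
    have hS : (Ioo (-1:ℝ) 1 ∩ v ⁻¹' Iio (c + δ / (2 * α ^ 2))) ∈ nhds (0:ℝ) :=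
      Filter.inter_mem (Ioo_mem_nhds (by norm_num) (by norm_num))
        (hca (Iio_mem_nhds ht))
    obtain ⟨l, u, ⟨hl, hu⟩, hsub⟩ := mem_nhds_iff_exists_Ioo_subset.mp hS
    set ξ₀ : ℝ := Real.sqrt (c * δ / 2) with hξdef
    have hξ₀ : 0 < ξ₀ := Real.sqrt_pos.mpr (by positivity)
    have hξ₀sq : ξ₀ ^ 2 = c * δ / 2 := Real.sq_sqrt (by positivity)
    have hsubset : Ioo l u ×ˢ Ioo (-ξ₀) ξ₀ ⊆
        {p : ℝ × ℝ | p.1 ∈ Ioo (-1 : ℝ) 1 ∧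
          p.2 ^ 2 / v p.1 + α ^ 2 * v p.1 < L} := by
      rintro ⟨x, ξ⟩ ⟨hx, hξ⟩
      obtain ⟨hx1, hx2⟩ := hsub hx
      have hvx : c ≤ v x := hv_ge _ hx1
      have hvxpos : 0 < v x := hc.trans_le hvx
      have hξsq : ξ ^ 2 < c * δ / 2 := by
        rw [← hξ₀sq]
        have : |ξ| < ξ₀ := abs_lt.mpr ⟨hξ.1, hξ.2⟩
        calc ξ ^ 2 = |ξ| ^ 2 := (sq_abs ξ).symm
          _ < ξ₀ ^ 2 := by nlinarith [abs_nonneg ξ]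
      have h1 : ξ ^ 2 / v x ≤ ξ ^ 2 / c :=
        div_le_div_of_nonneg_left (sq_nonneg _) hc hvx
      have h2 : ξ ^ 2 / c < δ / 2 := by
        rw [div_lt_iff₀ hc]; nlinarith
      have hx2' : v x < c + δ / (2 * α ^ 2) := hx2
      have h3 : α ^ 2 * v x < α ^ 2 * c + δ / 2 := by
        have key : α ^ 2 * (δ / (2 * α ^ 2)) = δ / 2 := by
          field_simp
        nlinarith [mul_lt_mul_of_pos_left hx2' hα2]
      refine ⟨hx1, ?_⟩
      simp only
      linarith
    refine lt_of_lt_of_le ?_ (measure_mono hsubset)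
    rw [Measure.volume_eq_prod, Measure.prod_prod, Real.volume_Ioo, Real.volume_Ioo]
    have h1 : (0:ℝ) < u - l := by linarith
    have h2 : (0:ℝ) < ξ₀ - -ξ₀ := by linarith
    exact ENNReal.mul_pos (ENNReal.ofReal_pos.mpr h1).ne'
      (ENNReal.ofReal_pos.mpr h2).ne'
end

section
/- Let a > 0 and let b, d, α, λ be real numbers with λa − α²a² ≥ 0, and set X = √(λa − α²a²). Then ∫_0^X [ −(1/2)( (2ξ⁴/(3a²))(d/a² − 2b²/a³) − 2α²dξ²/a² ) − (2ξ²/(3a))( ξ²(3b²/a⁴ − d/a³) + α²(d/a − b²/a²) ) − (b²/(3a))(α² − ξ²/a²)² + (b²/(2a))( 5ξ⁴/(2a⁴) − 3ξ²α²/a² + α⁴/2 ) ] dξ = X · ( −α⁴b²/(9a) − λα²d/(45a) + λα²b²/(9a²) + λ²d/(15a²) − 2α⁴d/45 − λ²b²/(12a³) ). -/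
/-! After clearing denominators the integrand is an even quartic `c₄ ξ⁴ + c₂ ξ² + c₀`, whose
integral over `[0, X]` is `X (c₄ X⁴ / 5 + c₂ X² / 3 + c₀)`; substituting `X² = λa - α²a²` gives
the stated product. -/

open MeasureTheory intervalIntegral

theorem integral_biquadratic (c₄ c₂ c₀ X : ℝ) :
    ∫ ξ in (0 : ℝ)..X, (c₄ * ξ ^ 4 + c₂ * ξ ^ 2 + c₀) =
      X * (c₄ * (X ^ 2) ^ 2 / 5 + c₂ * X ^ 2 / 3 + c₀) := by
  have hpow (n : ℕ) : IntervalIntegrable (fun ξ : ℝ => ξ ^ n) volume 0 X :=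
    (continuous_pow n).intervalIntegrable _ _
  rw [integral_add ((hpow 4).const_mul _ |>.add ((hpow 2).const_mul _)) intervalIntegrable_const,
    integral_add ((hpow 4).const_mul _) ((hpow 2).const_mul _), intervalIntegral.integral_const_mul,
    intervalIntegral.integral_const_mul, integral_pow, integral_pow, intervalIntegral.integral_const]
  simp only [smul_eq_mul]
  ring

theorem fiber_integrand_eq {a : ℝ} (ha : a ≠ 0) (b d α ξ : ℝ) :
    -(1 / 2) * ((2 * ξ ^ 4 / (3 * a ^ 2)) * (d / a ^ 2 - 2 * b ^ 2 / a ^ 3) -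
            2 * α ^ 2 * d * ξ ^ 2 / a ^ 2)
          - (2 * ξ ^ 2 / (3 * a)) *
              (ξ ^ 2 * (3 * b ^ 2 / a ^ 4 - d / a ^ 3) + α ^ 2 * (d / a - b ^ 2 / a ^ 2))
          - (b ^ 2 / (3 * a)) * (α ^ 2 - ξ ^ 2 / a ^ 2) ^ 2
          + (b ^ 2 / (2 * a)) *
              (5 * ξ ^ 4 / (2 * a ^ 4) - 3 * ξ ^ 2 * α ^ 2 / a ^ 2 + α ^ 4 / 2)
      = (d / (3 * a ^ 4) - 5 * b ^ 2 / (12 * a ^ 5)) * ξ ^ 4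
        + (α ^ 2 * d / (3 * a ^ 2) - α ^ 2 * b ^ 2 / (6 * a ^ 3)) * ξ ^ 2
        + -(b ^ 2 * α ^ 4 / (12 * a)) := by
  field_simp
  ring

/-- Explicit `ξ`-integration, over the fiber `0 < ξ < X = √(λa - α²a²)`, of the integrand of
the second-order spectral invariant, with `a = v(x)`, `b = v'(x)`, `d = v''(x)`. -/
theorem fiberwise_xi_integration
    (a b d α lam : ℝ) (ha : 0 < a) (hnonneg : 0 ≤ lam * a - α ^ 2 * a ^ 2) :
    (∫ ξ in (0 : ℝ)..Real.sqrt (lam * a - α ^ 2 * a ^ 2),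
        (-(1 / 2) * ((2 * ξ ^ 4 / (3 * a ^ 2)) * (d / a ^ 2 - 2 * b ^ 2 / a ^ 3) -
            2 * α ^ 2 * d * ξ ^ 2 / a ^ 2)
          - (2 * ξ ^ 2 / (3 * a)) *
              (ξ ^ 2 * (3 * b ^ 2 / a ^ 4 - d / a ^ 3) + α ^ 2 * (d / a - b ^ 2 / a ^ 2))
          - (b ^ 2 / (3 * a)) * (α ^ 2 - ξ ^ 2 / a ^ 2) ^ 2
          + (b ^ 2 / (2 * a)) *
              (5 * ξ ^ 4 / (2 * a ^ 4) - 3 * ξ ^ 2 * α ^ 2 / a ^ 2 + α ^ 4 / 2)))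
      = Real.sqrt (lam * a - α ^ 2 * a ^ 2) *
          (-α ^ 4 * b ^ 2 / (9 * a) - lam * α ^ 2 * d / (45 * a) +
            lam * α ^ 2 * b ^ 2 / (9 * a ^ 2) + lam ^ 2 * d / (15 * a ^ 2) -
            2 * α ^ 4 * d / 45 - lam ^ 2 * b ^ 2 / (12 * a ^ 3)) := by
  rw [integral_congr fun ξ _ => fiber_integrand_eq ha.ne' b d α ξ, integral_biquadratic,
    Real.sq_sqrt hnonneg]
  congr 1
  field_simp
  ring
end

section
/- Let α ≠ 0, c > 0, and let v : [0,1) → ℝ be positive, twice continuously differentiable, with v(0) = c, v' > 0 on (0,1), and v(x) → +∞ as x → 1. Let f₁ : (c,∞) → (0,1) be the inverse of v. Let λ > α²c and let A₁^λ = {(x,ξ) : 0 ≤ x < 1, 0 < ξ, ξ²/v(x) + α²v(x) < λ}. Then ∬_{A₁^λ} [ −(1/2)( (2ξ⁴/(3v²))(v''/v² − 2(v')²/v³) − 2α²v''ξ²/v² ) − (2ξ²/(3v))( ξ²(3(v')²/v⁴ − v''/v³) + α²(v''/v − (v')²/v²) ) − ((v')²/(3v))(α² − ξ²/v²)² + ((v')²/(2v))(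 5ξ⁴/(2v⁴) − 3ξ²α²/v² + α⁴/2 ) ] dx dξ = ∫_c^{λ/α²} √(λ − α²s) [ ( −α⁴/(9√s) + λα²/(9s√s) − λ²/(12s²√s) ) · (1/f₁'(s)) + ( λα²/(45√s) − λ²/(15s√s) + 2α⁴√s/45 ) · ( f₁''(s)/(f₁'(s))² ) ] ds. -/
/-!
Integrating in `ξ` first, `A₁^λ` is the region under the graph of `√(v (λ - α² v))` over
`0 ≤ x < f₁ (λ / α²)`, and the integrand is an even quartic polynomial in `ξ`, so each vertical
segment contributes an explicit function of `v, v', v''`. The substitution `s = v x`, together with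
`f₁'(v x) = 1 / v'(x)` and `f₁''(v x) = -v''(x) / v'(x)³`, turns the remaining `x`-integral into
the `s`-integral on the right.
-/

open Set MeasureTheory Filter Topology

theorem setIntegral_regionBetween {α E : Type*} [MeasurableSpace α] [NormedAddCommGroup E]
    [NormedSpace ℝ E] {μ : Measure α} [SFinite μ] {f g : α → ℝ} {s : Set α}
    (hs : MeasurableSet s) (hf : AEMeasurable f (μ.restrict s))
    (hg : AEMeasurable g (μ.restrict s)) {H : α × ℝ → E}
    (hH : IntegrableOn H (regionBetween f g s) (μ.prod volume)) :
    ∫ p in regionBetween f g s, H p ∂μ.prod volume =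
      ∫ x in s, (∫ y in Ioo (f x) (g x), H (x, y)) ∂μ := by
  have hrestrict : (μ.prod volume).restrict (regionBetween f g s) =
      ((μ.restrict s).prod volume).restrict (regionBetween f g univ) := by
    rw [Measure.restrict_prod_eq_prod_univ, Measure.restrict_restrict' (hs.prod .univ)]
    congr 1
    ext p
    simp [regionBetween, and_comm]
  have hm : NullMeasurableSet (regionBetween f g univ) ((μ.restrict s).prod volume) :=
    nullMeasurableSet_regionBetween _ hf hg nullMeasurableSet_univ
  have hH' : IntegrableOn H (regionBetween f g univ) ((μ.restrict s).prod volume) := by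
    rw [IntegrableOn, ← hrestrict]
    exact hH
  have hsection : ∀ x y, (regionBetween f g univ).indicator H (x, y) =
      (Ioo (f x) (g x)).indicator (fun y => H (x, y)) y := by
    intro x y
    simp [indicator, regionBetween]
  rw [hrestrict, ← integral_indicator₀ hm, integral_prod _ (hH'.integrable_indicator₀ hm)]
  simp only [hsection, integral_indicator measurableSet_Ioo]

theorem integrableOn_regionBetween {α E : Type*} [TopologicalSpace α] [MeasurableSpace α]
    [OpensMeasurableSpace α] [T2Space α] [NormedAddCommGroup E]
    {μ : Measure α} [IsFiniteMeasureOnCompacts μ] {f g : α → ℝ} {s : Set α}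
    (hs : IsCompact s) (hf : ContinuousOn f s) (hg : ContinuousOn g s) {H : α × ℝ → E}
    (hH : ContinuousOn H (s ×ˢ univ)) : IntegrableOn H (regionBetween f g s) (μ.prod volume) := by
  obtain ⟨m, hm⟩ := hs.bddBelow_image hf
  obtain ⟨M, hM⟩ := hs.bddAbove_image hg
  refine ((hH.mono (prod_mono subset_rfl (subset_univ _))).integrableOn_compact
    (hs.prod (isCompact_Icc (a := m) (b := M)))).mono_set fun p hp => ⟨hp.1, ?_, ?_⟩
  · exact (hm (mem_image_of_mem f hp.1)).trans hp.2.1.le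
  · exact hp.2.2.le.trans (hM (mem_image_of_mem g hp.1))

theorem integral_Ioo_even_quartic (a₀ a₂ a₄ b : ℝ) (hb : 0 ≤ b) :
    ∫ ξ in Ioo 0 b, (a₀ + a₂ * ξ ^ 2 + a₄ * ξ ^ 4) =
      a₀ * b + a₂ * b ^ 3 / 3 + a₄ * b ^ 5 / 5 := by
  have hmonomial (a : ℝ) (n : ℕ) : IntervalIntegrable (fun ξ : ℝ => a * ξ ^ n) volume 0 b :=
    (continuous_const.mul (continuous_pow n)).intervalIntegrable 0 b
  rw [← integral_Ioc_eq_integral_Ioo, ← intervalIntegral.integral_of_le hb,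
    intervalIntegral.integral_add (intervalIntegrable_const.add (hmonomial _ _)) (hmonomial _ _),
    intervalIntegral.integral_add intervalIntegrable_const (hmonomial _ _)]
  simp only [intervalIntegral.integral_const, intervalIntegral.integral_const_mul, integral_pow]
  norm_num
  ring

theorem deriv_deriv_eq_derivWithin_derivWithin {𝕜 F : Type*} [NontriviallyNormedField 𝕜]
    [NormedAddCommGroup F] [NormedSpace 𝕜 F] {f : 𝕜 → F} {s : Set 𝕜} {x : 𝕜} (h : s ∈ 𝓝 x) :
    deriv (deriv f) x = derivWithin (derivWithin f s) s x := by
  have hf : deriv f =ᶠ[𝓝 x] derivWithin f s :=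
    (eventually_mem_nhds_iff.2 h).mono fun y hy => (derivWithin_of_mem_nhds hy).symm
  rw [hf.deriv_eq, derivWithin_of_mem_nhds h]

theorem StrictMonoOn.continuousAt_of_leftInvOn {α β : Type*} [LinearOrder α]
    [TopologicalSpace α] [OrderTopology α] [LinearOrder β] [TopologicalSpace β] [OrderTopology β]
    [DenselyOrdered β] {v : β → α} {f : α → β} {I : Set β} {U : Set α} (hv : StrictMonoOn v I)
    (hI : IsOpen I) (hU : IsOpen U) (hvI : MapsTo v I U) (hfU : MapsTo f U I)
    (hvf : LeftInvOn v f U) {s : α} (hs : s ∈ U) : ContinuousAt f s := by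
  have hfv : LeftInvOn f v I := hv.injOn.rightInvOn_of_leftInvOn hvf hvI hfU
  refine continuousAt_of_monotoneOn_of_image_mem_nhds (fun a ha b hb hab => ?_)
    (hU.mem_nhds hs) ?_
  · exact (hv.le_iff_le (hfU ha) (hfU hb)).1 (by rwa [hvf ha, hvf hb])
  · exact mem_of_superset (hI.mem_nhds (hfU hs)) fun x hx => ⟨v x, hvI hx, hfv hx⟩

section InverseDerivatives

variable {𝕜 : Type*} [NontriviallyNormedField 𝕜] {v v' v'' f : 𝕜 → 𝕜} {U : Set 𝕜}

theorem hasDerivAt_of_leftInvOn_s10 (hU : IsOpen U) (hf : ∀ s ∈ U, ContinuousAt f s)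
    (hvf : LeftInvOn v f U) (hv : ∀ s ∈ U, HasDerivAt v (v' (f s)) (f s))
    (hv' : ∀ s ∈ U, v' (f s) ≠ 0) {s : 𝕜} (hs : s ∈ U) : HasDerivAt f (v' (f s))⁻¹ s :=
  .of_local_left_inverse (hf s hs) (hv s hs) (hv' s hs) (eventually_of_mem (hU.mem_nhds hs) hvf)

theorem hasDerivAt_deriv_of_leftInvOn (hU : IsOpen U) (hf : ∀ s ∈ U, ContinuousAt f s)
    (hvf : LeftInvOn v f U) (hv : ∀ s ∈ U, HasDerivAt v (v' (f s)) (f s))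
    (hv'' : ∀ s ∈ U, HasDerivAt v' (v'' (f s)) (f s)) (hv' : ∀ s ∈ U, v' (f s) ≠ 0) {s : 𝕜}
    (hs : s ∈ U) : HasDerivAt (deriv f) (-v'' (f s) / v' (f s) ^ 3) s := by
  have hderiv : deriv f =ᶠ[𝓝 s] fun t => (v' (f t))⁻¹ := eventually_of_mem (hU.mem_nhds hs)
    fun t ht => (hasDerivAt_of_leftInvOn_s10 hU hf hvf hv hv' ht).deriv
  have h := ((hv'' s hs).comp s (hasDerivAt_of_leftInvOn_s10 hU hf hvf hv hv' hs)).inv (hv' s hs)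
  refine (h.congr_of_eventuallyEq hderiv).congr_deriv ?_
  rw [Function.comp_apply]
  field_simp [hv' s hs]

end InverseDerivatives

theorem deriv_leftInvOn_apply {v f : ℝ → ℝ} {I U : Set ℝ} (hI : IsOpen I) (hU : IsOpen U)
    (hv : ContDiffOn ℝ 2 v I) (hv' : ∀ x ∈ I, deriv v x ≠ 0) (hmono : StrictMonoOn v I)
    (hvI : MapsTo v I U) (hfU : MapsTo f U I) (hvf : LeftInvOn v f U) {x : ℝ} (hx : x ∈ I) :
    deriv f (v x) = (deriv v x)⁻¹ ∧
      deriv (deriv f) (v x) = -deriv (deriv v) x / deriv v x ^ 3 := by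
  have hfv : LeftInvOn f v I := hmono.injOn.rightInvOn_of_leftInvOn hvf hvI hfU
  have hf : ∀ s ∈ U, ContinuousAt f s := fun s hs =>
    hmono.continuousAt_of_leftInvOn hI hU hvI hfU hvf hs
  have hd₁ : ∀ s ∈ U, HasDerivAt v (deriv v (f s)) (f s) := fun s hs =>
    ((hv.differentiableOn two_ne_zero _ (hfU hs)).differentiableAt
      (hI.mem_nhds (hfU hs))).hasDerivAt
  have hd₂ : ∀ s ∈ U, HasDerivAt (deriv v) (deriv (deriv v) (f s)) (f s) := fun s hs =>
    (((hv.deriv_of_isOpen hI (by norm_num)).differentiableOn one_ne_zero _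
      (hfU hs)).differentiableAt (hI.mem_nhds (hfU hs))).hasDerivAt
  have hne : ∀ s ∈ U, deriv v (f s) ≠ 0 := fun s hs => hv' _ (hfU hs)
  have h₁ := (hasDerivAt_of_leftInvOn_s10 hU hf hvf hd₁ hne (hvI hx)).deriv
  have h₂ := (hasDerivAt_deriv_of_leftInvOn hU hf hvf hd₁ hd₂ hne (hvI hx)).deriv
  rw [hfv hx] at h₁ h₂
  exact ⟨h₁, h₂⟩

/-- The integrand of the left-hand side, with `V, V₁, V₂` standing for `v(x), v'(x), v''(x)`. -/
noncomputable def phaseDensity (α V V₁ V₂ ξ : ℝ) : ℝ :=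
  -(1 / 2) * ((2 * ξ ^ 4 / (3 * V ^ 2)) * (V₂ / V ^ 2 - 2 * V₁ ^ 2 / V ^ 3) -
      2 * α ^ 2 * V₂ * ξ ^ 2 / V ^ 2)
    - (2 * ξ ^ 2 / (3 * V)) *
        (ξ ^ 2 * (3 * V₁ ^ 2 / V ^ 4 - V₂ / V ^ 3) + α ^ 2 * (V₂ / V - V₁ ^ 2 / V ^ 2))
    - (V₁ ^ 2 / (3 * V)) * (α ^ 2 - ξ ^ 2 / V ^ 2) ^ 2
    + (V₁ ^ 2 / (2 * V)) * (5 * ξ ^ 4 / (2 * V ^ 4) - 3 * ξ ^ 2 * α ^ 2 / V ^ 2 + α ^ 4 / 2)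

/-- The integrand of the right-hand side, with `D₁, D₂` standing for `f₁'(s), f₁''(s)`. -/
noncomputable def levelDensity (α lam s D₁ D₂ : ℝ) : ℝ :=
  √(lam - α ^ 2 * s) *
    ((-α ^ 4 / (9 * √s) + lam * α ^ 2 / (9 * s * √s) - lam ^ 2 / (12 * s ^ 2 * √s)) * (1 / D₁) +
      (lam * α ^ 2 / (45 * √s) - lam ^ 2 / (15 * s * √s) + 2 * α ^ 4 * √s / 45) *
        (D₂ / D₁ ^ 2))

noncomputable def phaseColumn (α lam V V₁ V₂ : ℝ) : ℝ :=
  -α ^ 4 * V₁ ^ 2 / (12 * V) * √(V * (lam - α ^ 2 * V)) +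
    (α ^ 2 * V₂ / (3 * V ^ 2) - α ^ 2 * V₁ ^ 2 / (6 * V ^ 3)) * √(V * (lam - α ^ 2 * V)) ^ 3 / 3 +
    (V₂ / (3 * V ^ 4) - 5 * V₁ ^ 2 / (12 * V ^ 5)) * √(V * (lam - α ^ 2 * V)) ^ 5 / 5

theorem phaseDensity_eq_even_quartic (α V V₁ V₂ ξ : ℝ) (hV : V ≠ 0) :
    phaseDensity α V V₁ V₂ ξ = -α ^ 4 * V₁ ^ 2 / (12 * V) +
      (α ^ 2 * V₂ / (3 * V ^ 2) - α ^ 2 * V₁ ^ 2 / (6 * V ^ 3)) * ξ ^ 2 +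
      (V₂ / (3 * V ^ 4) - 5 * V₁ ^ 2 / (12 * V ^ 5)) * ξ ^ 4 := by
  unfold phaseDensity
  field_simp
  ring

theorem integral_phaseDensity (α lam V V₁ V₂ : ℝ) (hV : V ≠ 0) :
    ∫ ξ in Ioo 0 √(V * (lam - α ^ 2 * V)), phaseDensity α V V₁ V₂ ξ =
      phaseColumn α lam V V₁ V₂ := by
  simp_rw [phaseDensity_eq_even_quartic _ _ _ _ _ hV]
  exact integral_Ioo_even_quartic _ _ _ _ (Real.sqrt_nonneg _)

theorem mul_levelDensity_eq_phaseColumn (α lam V V₁ V₂ : ℝ) (hV : 0 < V) (hV₁ : V₁ ≠ 0)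
    (hlam : 0 < lam - α ^ 2 * V) :
    V₁ * levelDensity α lam V V₁⁻¹ (-V₂ / V₁ ^ 3) = phaseColumn α lam V V₁ V₂ := by
  unfold levelDensity phaseColumn
  obtain ⟨a, ha, rfl⟩ : ∃ a, 0 < a ∧ V = a ^ 2 :=
    ⟨√V, Real.sqrt_pos.2 hV, (Real.sq_sqrt hV.le).symm⟩
  obtain ⟨b, hb, hlam_eq⟩ : ∃ b, 0 < b ∧ lam - α ^ 2 * a ^ 2 = b ^ 2 :=
    ⟨√(lam - α ^ 2 * a ^ 2), Real.sqrt_pos.2 hlam, (Real.sq_sqrt hlam.le).symm⟩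
  obtain rfl : lam = α ^ 2 * a ^ 2 + b ^ 2 := by linarith
  rw [Real.sqrt_mul (sq_nonneg a), hlam_eq, Real.sqrt_sq ha.le, Real.sqrt_sq hb.le]
  field_simp
  ring

theorem continuousAt_phaseDensity (α : ℝ) {q : ℝ × ℝ × ℝ × ℝ} (hq : q.1 ≠ 0) :
    ContinuousAt (fun q : ℝ × ℝ × ℝ × ℝ => phaseDensity α q.1 q.2.1 q.2.2.1 q.2.2.2) q := by
  unfold phaseDensity
  fun_prop (disch := positivity)

theorem ContinuousOn.phaseDensity {X : Type*} [TopologicalSpace X] (α : ℝ) {V V₁ V₂ ξ : X → ℝ}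
    {s : Set X} (hV : ContinuousOn V s) (hV₁ : ContinuousOn V₁ s) (hV₂ : ContinuousOn V₂ s)
    (hξ : ContinuousOn ξ s) (h0 : ∀ x ∈ s, V x ≠ 0) :
    ContinuousOn (fun x => _root_.phaseDensity α (V x) (V₁ x) (V₂ x) (ξ x)) s := fun x hx =>
  ContinuousAt.comp_continuousWithinAt
    (g := fun q : ℝ × ℝ × ℝ × ℝ => _root_.phaseDensity α q.1 q.2.1 q.2.2.1 q.2.2.2)
    (f := fun x => (V x, V₁ x, V₂ x, ξ x)) (continuousAt_phaseDensity α (h0 x hx))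
    ((hV x hx).prodMk ((hV₁ x hx).prodMk ((hV₂ x hx).prodMk (hξ x hx))))

theorem sq_div_add_lt_iff_lt_sqrt {a lam V ξ : ℝ} (hV : 0 < V) (hξ : 0 ≤ ξ) :
    ξ ^ 2 / V + a * V < lam ↔ ξ < √(V * (lam - a * V)) := by
  rw [Real.lt_sqrt hξ, ← lt_sub_iff_add_lt, div_lt_iff₀ hV, mul_comm]

theorem setOf_sq_div_add_lt_eq_regionBetween {α lam : ℝ} {v : ℝ → ℝ}
    (hv_pos : ∀ x ∈ Ico (0 : ℝ) 1, 0 < v x) (hmono : StrictMonoOn v (Ico 0 1)) {T : ℝ}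
    (hT : T ∈ Ico (0 : ℝ) 1) (hvT : α ^ 2 * v T = lam) :
    {q : ℝ × ℝ | 0 ≤ q.1 ∧ q.1 < 1 ∧ 0 < q.2 ∧ q.2 ^ 2 / v q.1 + α ^ 2 * v q.1 < lam} =
      regionBetween 0 (fun x => √(v x * (lam - α ^ 2 * v x))) (Ico 0 T) := by
  ext ⟨x, ξ⟩
  simp only [mem_ofPred_eq, regionBetween, mem_Ico, mem_Ioo, Pi.zero_apply]
  constructor
  · rintro ⟨hx₀, hx₁, hξ, hlt⟩
    have hvx := hv_pos x ⟨hx₀, hx₁⟩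
    have hxT : v x < v T := by
      have : 0 < ξ ^ 2 / v x := by positivity
      nlinarith [sq_nonneg α]
    exact ⟨⟨hx₀, (hmono.lt_iff_lt ⟨hx₀, hx₁⟩ hT).1 hxT⟩, hξ,
      (sq_div_add_lt_iff_lt_sqrt hvx hξ.le).1 hlt⟩
  · rintro ⟨⟨hx₀, hxT⟩, hξ, hlt⟩
    have hx₁ := hxT.trans hT.2
    exact ⟨hx₀, hx₁, hξ, (sq_div_add_lt_iff_lt_sqrt (hv_pos x ⟨hx₀, hx₁⟩) hξ.le).2 hlt⟩

theorem setIntegral_regionBetween_phaseDensity (α lam : ℝ) {v : ℝ → ℝ}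
    (hv : ContDiffOn ℝ 2 v (Ico 0 1)) (hv_pos : ∀ x ∈ Ico (0 : ℝ) 1, 0 < v x) {T : ℝ}
    (hT : T < 1) :
    ∫ p in regionBetween 0 (fun x => √(v x * (lam - α ^ 2 * v x))) (Ico 0 T),
        phaseDensity α (v p.1) (deriv v p.1) (deriv (deriv v) p.1) p.2 =
      ∫ x in Ioo 0 T, phaseColumn α lam (v x) (deriv v x) (deriv (deriv v) x) := by
  -- unlike `deriv v`, these are continuous up to `x = 0`, which gives integrability on `Icc 0 T`
  set V₁ := derivWithin v (Ico 0 1)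
  set V₂ := derivWithin V₁ (Ico 0 1)
  set R := regionBetween 0 (fun x => √(v x * (lam - α ^ 2 * v x))) (Ico 0 T)
  have hU : UniqueDiffOn ℝ (Ico (0 : ℝ) 1) := uniqueDiffOn_Ico 0 1
  have hIcc : Icc 0 T ⊆ Ico (0 : ℝ) 1 := Icc_subset_Ico_right hT
  have hv₀ : ContinuousOn v (Icc 0 T) := hv.continuousOn.mono hIcc
  have hV₁ : ContinuousOn V₁ (Icc 0 T) := (hv.continuousOn_derivWithin hU (by norm_num)).mono hIcc
  have hV₂ : ContinuousOn V₂ (Icc 0 T) :=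
    ((hv.derivWithin hU (by norm_num)).continuousOn_derivWithin hU le_rfl).mono hIcc
  have hg : ContinuousOn (fun x => √(v x * (lam - α ^ 2 * v x))) (Icc 0 T) := by fun_prop
  have hint : IntegrableOn (fun p : ℝ × ℝ => phaseDensity α (v p.1) (V₁ p.1) (V₂ p.1) p.2) R := by
    refine (integrableOn_regionBetween isCompact_Icc continuousOn_const hg ?_).mono_set
      fun p hp => ⟨Ico_subset_Icc_self hp.1, hp.2⟩
    have hfst := continuousOn_fst (α := ℝ) (β := ℝ) (s := Icc 0 T ×ˢ univ)
    exact .phaseDensity α (hv₀.comp hfst fun p hp => hp.1) (hV₁.comp hfst fun p hp => hp.1)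
      (hV₂.comp hfst fun p hp => hp.1) continuousOn_snd fun p hp => (hv_pos _ (hIcc hp.1)).ne'
  have hderiv : ∀ x ∈ Ioo (0 : ℝ) 1, deriv v x = V₁ x ∧ deriv (deriv v) x = V₂ x :=
    fun x hx => ⟨(derivWithin_of_mem_nhds (Ico_mem_nhds_iff.2 hx)).symm,
      deriv_deriv_eq_derivWithin_derivWithin (Ico_mem_nhds_iff.2 hx)⟩
  have hae : ∀ᵐ p ∂volume.restrict R, phaseDensity α (v p.1) (deriv v p.1) (deriv (deriv v) p.1) p.2
      = phaseDensity α (v p.1) (V₁ p.1) (V₂ p.1) p.2 := by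
    refine ae_restrict_of_ae_restrict_of_subset (regionBetween_subset _ _ _) ?_
    have hline : ∀ᵐ p : ℝ × ℝ, p.1 ≠ 0 :=
      Measure.quasiMeasurePreserving_fst.ae (compl_mem_ae_iff.2 (measure_singleton (0 : ℝ)))
    filter_upwards [ae_restrict_mem (measurableSet_Ico.prod .univ), ae_restrict_of_ae hline]
      with p hp hp₀
    obtain ⟨h₁, h₂⟩ := hderiv p.1 ⟨lt_of_le_of_ne hp.1.1 hp₀.symm, hp.1.2.trans hT⟩
    rw [h₁, h₂]
  calc _ = ∫ p in R, phaseDensity α (v p.1) (V₁ p.1) (V₂ p.1) p.2 := integral_congr_ae hae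
    _ = ∫ x in Ico 0 T, ∫ ξ in Ioo 0 √(v x * (lam - α ^ 2 * v x)),
          phaseDensity α (v x) (V₁ x) (V₂ x) ξ :=
        setIntegral_regionBetween measurableSet_Ico aemeasurable_const
          ((hg.mono Ico_subset_Icc_self).aemeasurable measurableSet_Ico) hint
    _ = ∫ x in Ioo 0 T, ∫ ξ in Ioo 0 √(v x * (lam - α ^ 2 * v x)),
          phaseDensity α (v x) (V₁ x) (V₂ x) ξ := integral_Ico_eq_integral_Ioo
    _ = _ := setIntegral_congr_fun measurableSet_Ioo fun x hx => by
        obtain ⟨h₁, h₂⟩ := hderiv x ⟨hx.1, hx.2.trans hT⟩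
        rw [h₁, h₂]
        exact integral_phaseDensity _ _ _ _ _ (hv_pos x ⟨hx.1.le, hx.2.trans hT⟩).ne'

theorem setIntegral_levelDensity {α lam c : ℝ} (hα : α ≠ 0) {v f₁ : ℝ → ℝ}
    (hv : ContDiffOn ℝ 2 v (Ico 0 1)) (hv_pos : ∀ x ∈ Ico (0 : ℝ) 1, 0 < v x) (hv0 : v 0 = c)
    (hv_deriv : ∀ x ∈ Ioo (0 : ℝ) 1, 0 < deriv v x) (hmono : StrictMonoOn v (Ico 0 1))
    (hf₁_mem : MapsTo f₁ (Ioi c) (Ioo 0 1)) (hf₁_inv : LeftInvOn v f₁ (Ioi c)) {L : ℝ}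
    (hL : c < L) (hlam : α ^ 2 * L = lam) :
    ∫ s in Ioo c L, levelDensity α lam s (deriv f₁ s) (deriv (deriv f₁) s) =
      ∫ x in Ioo 0 (f₁ L), phaseColumn α lam (v x) (deriv v x) (deriv (deriv v) x) := by
  obtain ⟨hT₀, hT₁⟩ := hf₁_mem hL
  have hIcc : Icc 0 (f₁ L) ⊆ Ico (0 : ℝ) 1 := Icc_subset_Ico_right hT₁
  have hIoo : Ioo 0 (f₁ L) ⊆ Ioo (0 : ℝ) 1 := Ioo_subset_Ioo_right hT₁.le
  have hmono' : StrictMonoOn v (Ioo 0 1) := hmono.mono Ioo_subset_Ico_self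
  have hvI : MapsTo v (Ioo 0 1) (Ioi c) := fun x hx =>
    hv0 ▸ hmono (left_mem_Ico.2 one_pos) (Ioo_subset_Ico_self hx) hx.1
  have himage : v '' Ioo 0 (f₁ L) = Ioo c L := by
    rw [(hv.continuousOn.mono hIcc).image_Ioo_of_strictMonoOn hT₀.le (hmono.mono hIcc), hv0,
      hf₁_inv hL]
  have hd : ∀ x ∈ Ioo (0 : ℝ) 1, HasDerivAt v (deriv v x) x := fun x hx =>
    ((hv.differentiableOn two_ne_zero x (Ioo_subset_Ico_self hx)).differentiableAt
      (Ico_mem_nhds_iff.2 hx)).hasDerivAt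
  rw [← himage, integral_image_eq_integral_abs_deriv_smul measurableSet_Ioo
    (fun x hx => (hd x (hIoo hx)).hasDerivWithinAt) (hmono'.injOn.mono hIoo)]
  refine setIntegral_congr_fun measurableSet_Ioo fun x hx => ?_
  have hx₁ := hIoo hx
  obtain ⟨h₁, h₂⟩ := deriv_leftInvOn_apply isOpen_Ioo isOpen_Ioi (hv.mono Ioo_subset_Ico_self)
    (fun x hx => (hv_deriv x hx).ne') hmono' hvI hf₁_mem hf₁_inv hx₁
  have hvL : v x < L := hf₁_inv hL ▸ hmono' hx₁ ⟨hT₀, hT₁⟩ hx.2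
  rw [h₁, h₂, abs_of_pos (hv_deriv x hx₁), smul_eq_mul]
  exact mul_levelDensity_eq_phaseColumn _ _ _ _ _ (hv_pos x (Ioo_subset_Ico_self hx₁))
    (hv_deriv x hx₁).ne' (by nlinarith [sq_pos_of_ne_zero hα])

theorem second_invariant_region_change_of_variables_general
    (α c : ℝ) (hα : α ≠ 0) (v : ℝ → ℝ)
    (hv_pos : ∀ x ∈ Ico (0 : ℝ) 1, 0 < v x)
    (hv : ContDiffOn ℝ 2 v (Ico 0 1))
    (hv0 : v 0 = c)
    (hv_deriv : ∀ x ∈ Ioo (0 : ℝ) 1, 0 < deriv v x)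
    (f₁ : ℝ → ℝ)
    (hf₁_mem : ∀ s ∈ Ioi c, f₁ s ∈ Ioo (0 : ℝ) 1)
    (hf₁_inv : ∀ s ∈ Ioi c, v (f₁ s) = s)
    (lam : ℝ) (hlam : α ^ 2 * c < lam) :
    (∫ p in {q : ℝ × ℝ | 0 ≤ q.1 ∧ q.1 < 1 ∧ 0 < q.2 ∧
        q.2 ^ 2 / v q.1 + α ^ 2 * v q.1 < lam},
      (-(1 / 2) * ((2 * p.2 ^ 4 / (3 * (v p.1) ^ 2)) *
            (deriv (deriv v) p.1 / (v p.1) ^ 2 - 2 * (deriv v p.1) ^ 2 / (v p.1) ^ 3) -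
          2 * α ^ 2 * deriv (deriv v) p.1 * p.2 ^ 2 / (v p.1) ^ 2)
        - (2 * p.2 ^ 2 / (3 * v p.1)) *
            (p.2 ^ 2 * (3 * (deriv v p.1) ^ 2 / (v p.1) ^ 4 -
                deriv (deriv v) p.1 / (v p.1) ^ 3) +
              α ^ 2 * (deriv (deriv v) p.1 / v p.1 - (deriv v p.1) ^ 2 / (v p.1) ^ 2))
        - ((deriv v p.1) ^ 2 / (3 * v p.1)) * (α ^ 2 - p.2 ^ 2 / (v p.1) ^ 2) ^ 2
        + ((deriv v p.1) ^ 2 / (2 * v p.1)) *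
            (5 * p.2 ^ 4 / (2 * (v p.1) ^ 4) - 3 * p.2 ^ 2 * α ^ 2 / (v p.1) ^ 2 +
              α ^ 4 / 2)))
      = ∫ s in Ioo c (lam / α ^ 2),
          Real.sqrt (lam - α ^ 2 * s) *
            ((-α ^ 4 / (9 * Real.sqrt s) + lam * α ^ 2 / (9 * s * Real.sqrt s) -
                lam ^ 2 / (12 * s ^ 2 * Real.sqrt s)) * (1 / deriv f₁ s) +
              (lam * α ^ 2 / (45 * Real.sqrt s) - lam ^ 2 / (15 * s * Real.sqrt s) +
                2 * α ^ 4 * Real.sqrt s / 45) *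
                (deriv (deriv f₁) s / (deriv f₁ s) ^ 2)) := by
  have hL : c < lam / α ^ 2 := (lt_div_iff₀ (by positivity)).2 (by linarith)
  have hlamL : α ^ 2 * (lam / α ^ 2) = lam := by field_simp
  have hT := hf₁_mem _ hL
  have hmono : StrictMonoOn v (Ico 0 1) :=
    strictMonoOn_of_deriv_pos (convex_Ico 0 1) hv.continuousOn (by rwa [interior_Ico])
  rw [setOf_sq_div_add_lt_eq_regionBetween hv_pos hmono ⟨hT.1.le, hT.2⟩
    (by rw [hf₁_inv _ hL, hlamL])]
  exact (setIntegral_regionBetween_phaseDensity α lam hv hv_pos hT.2).trans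
    (setIntegral_levelDensity hα hv hv_pos hv0 hv_deriv hmono hf₁_mem hf₁_inv hL hlamL).symm

/-- The contribution of the first-quadrant region `A₁^λ` to the second-order spectral
invariant, rewritten in the variable `s = v(x)` via the inverse function `f₁`, so that
`v'(f₁(s)) = 1/f₁'(s)` and `v''(f₁(s)) = -f₁''(s)/(f₁'(s))³`. -/
theorem second_invariant_region_change_of_variables
    (α c : ℝ) (hα : α ≠ 0) (hc : 0 < c) (v : ℝ → ℝ)
    (hv_pos : ∀ x ∈ Ico (0 : ℝ) 1, 0 < v x)
    (hv : ContDiffOn ℝ 2 v (Ico 0 1))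
    (hv0 : v 0 = c)
    (hv_deriv : ∀ x ∈ Ioo (0 : ℝ) 1, 0 < deriv v x)
    (hv_top : Tendsto v (𝓝[<] (1 : ℝ)) atTop)
    (f₁ : ℝ → ℝ)
    (hf₁_mem : ∀ s ∈ Ioi c, f₁ s ∈ Ioo (0 : ℝ) 1)
    (hf₁_inv : ∀ s ∈ Ioi c, v (f₁ s) = s)
    (lam : ℝ) (hlam : α ^ 2 * c < lam) :
    (∫ p in {q : ℝ × ℝ | 0 ≤ q.1 ∧ q.1 < 1 ∧ 0 < q.2 ∧
        q.2 ^ 2 / v q.1 + α ^ 2 * v q.1 < lam},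
      (-(1 / 2) * ((2 * p.2 ^ 4 / (3 * (v p.1) ^ 2)) *
            (deriv (deriv v) p.1 / (v p.1) ^ 2 - 2 * (deriv v p.1) ^ 2 / (v p.1) ^ 3) -
          2 * α ^ 2 * deriv (deriv v) p.1 * p.2 ^ 2 / (v p.1) ^ 2)
        - (2 * p.2 ^ 2 / (3 * v p.1)) *
            (p.2 ^ 2 * (3 * (deriv v p.1) ^ 2 / (v p.1) ^ 4 -
                deriv (deriv v) p.1 / (v p.1) ^ 3) +
              α ^ 2 * (deriv (deriv v) p.1 / v p.1 - (deriv v p.1) ^ 2 / (v p.1) ^ 2))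
        - ((deriv v p.1) ^ 2 / (3 * v p.1)) * (α ^ 2 - p.2 ^ 2 / (v p.1) ^ 2) ^ 2
        + ((deriv v p.1) ^ 2 / (2 * v p.1)) *
            (5 * p.2 ^ 4 / (2 * (v p.1) ^ 4) - 3 * p.2 ^ 2 * α ^ 2 / (v p.1) ^ 2 +
              α ^ 4 / 2)))
      = ∫ s in Ioo c (lam / α ^ 2),
          Real.sqrt (lam - α ^ 2 * s) *
            ((-α ^ 4 / (9 * Real.sqrt s) + lam * α ^ 2 / (9 * s * Real.sqrt s) -
                lam ^ 2 / (12 * s ^ 2 * Real.sqrt s)) * (1 / deriv f₁ s) +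
              (lam * α ^ 2 / (45 * Real.sqrt s) - lam ^ 2 / (15 * s * Real.sqrt s) +
                2 * α ^ 4 * Real.sqrt s / 45) *
                (deriv (deriv f₁) s / (deriv f₁ s) ^ 2)) :=
  second_invariant_region_change_of_variables_general α c hα v hv_pos hv hv0 hv_deriv f₁ hf₁_mem
    hf₁_inv lam hlam
end
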